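/- arXiv:math-ph/0412019 — 9 statements merged into one kernel-verified Lean document; each statement's English description precedes it below -/
import Mathlib

section
/- Let Θ be a compact metric space, φ a continuous flow on Θ, and Φ a jointly continuous, exponentially bounded linear cocycle over φ with values in a finite-dimensional complex normed space E. If (θ_n, v_n)_{n∈ℕ} is a Mañé sequence for Φ with constants c, C > 0, then there exist θ₀ ∈ Θ and v₀ ∈ E with ‖v₀‖ ≥ c such that ‖Φ_t(θ₀) v₀‖ ≤ C for all t ∈ ℝ; in particular θ₀ is a Mañé point of Φ with Mañé vector v₀. -/
/-- On a compact metric space, a Mañé sequence of a jointly continuous,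
exponentially bounded linear cocycle over a continuous flow gives rise to a Mañé point. -/
theorem stmt_0
    {Θ : Type*} [MetricSpace Θ] [CompactSpace Θ]
    {E : Type*} [NormedAddCommGroup E] [NormedSpace ℂ E] [FiniteDimensional ℂ E]
    (φ : ℝ → Θ → Θ)
    (hφ0 : ∀ θ, φ 0 θ = θ)
    (hφadd : ∀ t s θ, φ (t + s) θ = φ t (φ s θ))
    (hφcont : Continuous fun p : ℝ × Θ => φ p.1 p.2)
    (Φ : ℝ → Θ → E →L[ℂ] E)
    (hΦ0 : ∀ θ, Φ 0 θ = ContinuousLinearMap.id ℂ E)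
    (hΦcoc : ∀ t s θ, Φ (t + s) θ = (Φ t (φ s θ)).comp (Φ s θ))
    (hΦcont : Continuous fun p : ℝ × Θ => Φ p.1 p.2)
    (K a : ℝ) (hK : 0 < K) (ha : 0 < a)
    (hΦbdd : ∀ t θ, ‖Φ t θ‖ ≤ K * Real.exp (a * |t|))
    (c C : ℝ) (hc : 0 < c) (hC : 0 < C)
    (θs : ℕ → Θ) (vs : ℕ → E)
    (hvs : ∃ M : ℝ, ∀ n, ‖vs n‖ ≤ M)
    (hmane1 : ∀ n : ℕ, c < ‖Φ (n : ℝ) (θs n) (vs n)‖)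
    (hmane2 : ∀ n : ℕ, ∀ t : ℝ, 0 ≤ t → t ≤ 2 * n → ‖Φ t (θs n) (vs n)‖ < C) :
    ∃ (θ₀ : Θ) (v₀ : E), c ≤ ‖v₀‖ ∧ ∀ t : ℝ, ‖Φ t θ₀ v₀‖ ≤ C := by
  haveI : ProperSpace E := FiniteDimensional.proper ℂ E
  -- shifted sequence
  set w : ℕ → E := fun n => Φ (n : ℝ) (θs n) (vs n) with hw
  set ψ : ℕ → Θ := fun n => φ (n : ℝ) (θs n) with hψ
  have hshift : ∀ (n : ℕ) (t : ℝ), Φ t (ψ n) (w n) = Φ (t + n) (θs n) (vs n) := by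
    intro n t
    rw [hΦcoc t n (θs n)]
    rfl
  have hwC : ∀ n, ‖w n‖ < C := by
    intro n
    exact hmane2 n n (Nat.cast_nonneg n) (by nlinarith [Nat.cast_nonneg (α := ℝ) n])
  have hwc : ∀ n, c < ‖w n‖ := hmane1
  -- interior bound
  have hmid : ∀ (n : ℕ) (t : ℝ), |t| ≤ n → ‖Φ t (ψ n) (w n)‖ < C := by
    intro n t ht
    rw [hshift]
    have h1 : -(n : ℝ) ≤ t := (abs_le.mp ht).1
    have h2 : t ≤ (n : ℝ) := (abs_le.mp ht).2
    exact hmane2 n (t + n) (by linarith) (by linarith)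
  -- compactness
  have hcompact : IsCompact ((Set.univ : Set Θ) ×ˢ Metric.closedBall (0 : E) C) :=
    isCompact_univ.prod (isCompact_closedBall 0 C)
  have hp : ∀ n, (ψ n, w n) ∈ (Set.univ : Set Θ) ×ˢ Metric.closedBall (0 : E) C := by
    intro n
    refine ⟨Set.mem_univ _, ?_⟩
    simpa [Metric.mem_closedBall, dist_eq_norm] using (hwC n).le
  obtain ⟨⟨θ₀, v₀⟩, -, k, hkmono, hklim⟩ := hcompact.tendsto_subseq hp
  refine ⟨θ₀, v₀, ?_, ?_⟩
  · have hnorm : Filter.Tendsto (fun n => ‖w (k n)‖) Filter.atTop (nhds ‖v₀‖) :=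
      (continuous_norm.tendsto v₀).comp ((continuous_snd.tendsto _).comp hklim)
    exact ge_of_tendsto' hnorm fun n => (hwc (k n)).le
  · intro t
    have hcontF : Continuous fun q : Θ × E => Φ t q.1 q.2 := by
      have h1 : Continuous fun q : Θ × E => ((Φ t q.1, q.2) : (E →L[ℂ] E) × E) := by
        refine Continuous.prodMk ?_ continuous_snd
        exact (hΦcont.comp (Continuous.prodMk continuous_const continuous_fst))
      exact isBoundedBilinearMap_apply.continuous.comp h1
    have hnorm : Filter.Tendsto (fun n => ‖Φ t (ψ (k n)) (w (k n))‖) Filter.atTop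
        (nhds ‖Φ t θ₀ v₀‖) :=
      (continuous_norm.tendsto _).comp ((hcontF.tendsto _).comp hklim)
    refine le_of_tendsto hnorm ?_
    have hk_ge : ∀ n, (n : ℕ) ≤ k n := fun n => hkmono.le_apply
    filter_upwards [Filter.eventually_ge_atTop (Nat.ceil |t|)] with n hn
    have : |t| ≤ (k n : ℝ) := by
      calc |t| ≤ (Nat.ceil |t| : ℝ) := Nat.le_ceil _
        _ ≤ (n : ℝ) := by exact_mod_cast hn
        _ ≤ (k n : ℝ) := by exact_mod_cast hk_ge n
    exact (hmid (k n) t this).le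
end

section
/- Let u : ℝⁿ → ℝⁿ be a C¹ vector field and a₀ a continuous matrix-valued symbol. Let x, ξ, b₁, …, b_{n−1} be differentiable curves such that (x, ξ, bᵢ) solves the bicharacteristic-amplitude system for each i = 1, …, n−1 (with the common pair (x, ξ)), with ξ(t) ≠ 0 for all t. Assume that the incompressibility constraint is preserved, i.e. bᵢ(t)·ξ(t) = 0 for all t and all i, and that the relation (a₀(x(t), ξ(t)) ξ(t))·ξ(t) = (Du(x(t)) ξ(t))·ξ(t) holds for all t. Then the function t ↦ det[b₁(t), …, b_{n−1}(t), ξ(t)] · ‖ξ(t)‖^{−2} · exp(−∫₀ᵗ tr a₀(x(s), ξ(s)) ds) is constant, where det[v₁, …, vₙ] denotes the determinant of the n×n complex matrix with columns v₁, …, vₙ (ξ(t) viewed as a vector in ℂⁿ). -/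
/-!
By Jacobi's formula, `D = det[b₁, …, b_{n-1}, ξ]` satisfies
`D' = tr(a₀) D + det[b₁, …, b_{n-1}, ξ' - a₀ ξ]`. Since every `bᵢ` is orthogonal to `ξ ≠ 0`,
replacing the last row by any `w` multiplies `D` by `(w·ξ)/|ξ|²`. The relation
`(a₀ξ)·ξ = (Du ξ)·ξ = -ξ'·ξ` then gives `D' = (tr a₀ + (|ξ|²)'/|ξ|²) D`, so
`D |ξ|⁻² exp(-∫ tr a₀)` has zero derivative.
-/

/-- The Jacobian matrix `Du(x)` of a vector field `u : ℝⁿ → ℝⁿ`, with entries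
`(Du)_{ij} = ∂u_i/∂x_j`. -/
noncomputable def jacobian {n : ℕ} (u : (Fin n → ℝ) → (Fin n → ℝ)) (x : Fin n → ℝ) :
    Matrix (Fin n) (Fin n) ℝ :=
  Matrix.of fun i j => fderiv ℝ u x (Pi.single j 1) i

open Matrix

namespace Matrix

variable {ι : Type*} [Fintype ι] [DecidableEq ι]

theorem sum_det_updateRow_mulVec {R : Type*} [CommRing R] (M A : Matrix ι ι R) :
    ∑ j, (M.updateRow j (A *ᵥ M j)).det = A.trace * M.det := by
  calc ∑ j, (M.updateRow j (A *ᵥ M j)).det = ∑ j, (Mᵀ.adjugate * A * Mᵀ) j j := by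
        refine Finset.sum_congr rfl fun j _ => ?_
        rw [← cramer_transpose_apply, cramer_eq_adjugate_mulVec, mulVec_mulVec]
        simp [mul_apply, mulVec, dotProduct]
    _ = trace (Mᵀ.adjugate * A * Mᵀ) := rfl
    _ = A.trace * M.det := by
        rw [trace_mul_cycle, mul_adjugate, det_transpose, smul_mul, one_mul, trace_smul,
          smul_eq_mul, mul_comm]

variable {K : Type*} [Field K] {M : Matrix ι ι K} {k : ι} {v : ι → K}

theorem det_updateRow_of_dotProduct_eq_zero (hk : M k = v) (hM : ∀ j ≠ k, M j ⬝ᵥ v = 0)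
    (hv : v ⬝ᵥ v ≠ 0) (w : ι → K) :
    (M.updateRow k w).det = w ⬝ᵥ v / (v ⬝ᵥ v) * M.det := by
  set c := w ⬝ᵥ v / (v ⬝ᵥ v)
  have hperp : (M.updateRow k (w - c • v)).det = 0 := by
    refine exists_mulVec_eq_zero_iff.mp ⟨v, fun h => hv (by simp [h]), funext fun j => ?_⟩
    rcases eq_or_ne j k with rfl | hj
    · rw [mulVec, updateRow_self, sub_dotProduct, smul_dotProduct, smul_eq_mul,
        div_mul_cancel₀ _ hv, sub_self, Pi.zero_apply]
    · simpa [mulVec, updateRow_ne hj] using hM j hj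
  rw [show w = c • v + (w - c • v) by abel, det_updateRow_add, det_updateRow_smul, hperp, add_zero,
    ← hk, updateRow_eq_self]

theorem sum_det_updateRow_of_dotProduct_eq_zero (hk : M k = v) (hM : ∀ j ≠ k, M j ⬝ᵥ v = 0)
    (hv : v ⬝ᵥ v ≠ 0) (A : Matrix ι ι K) {N : ι → ι → K} (hN : ∀ j ≠ k, N j = A *ᵥ M j) :
    ∑ j, (M.updateRow j (N j)).det = (A.trace + (N k - A *ᵥ v) ⬝ᵥ v / (v ⬝ᵥ v)) * M.det := by
  set w := N k - A *ᵥ v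
  have hsplit : ∀ j, N j = A *ᵥ M j + (Pi.single k w : ι → ι → K) j := by
    intro j
    rcases eq_or_ne j k with rfl | hj
    · simp [w, hk]
    · simp [hN j hj, hj]
  calc ∑ j, (M.updateRow j (N j)).det
      = ∑ j, ((M.updateRow j (A *ᵥ M j)).det +
          (M.updateRow j ((Pi.single k w : ι → ι → K) j)).det) :=
        Finset.sum_congr rfl fun j _ => by rw [hsplit j, det_updateRow_add]
    _ = A.trace * M.det + (M.updateRow k w).det := by
        rw [Finset.sum_add_distrib, sum_det_updateRow_mulVec, Finset.sum_eq_single k,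
          Pi.single_eq_same]
        · intro j _ hj
          exact det_eq_zero_of_row_eq_zero j fun i => by
            rw [updateRow_self, Pi.single_eq_of_ne hj, Pi.zero_apply]
        · simp
    _ = _ := by rw [det_updateRow_of_dotProduct_eq_zero hk hM hv, add_mul]

end Matrix

theorem HasDerivAt.matrix_det {𝕜 ι : Type*} [RCLike 𝕜] [Fintype ι] [DecidableEq ι]
    {M : ℝ → ι → ι → 𝕜} {M' : ι → ι → 𝕜} {t : ℝ} (hM : HasDerivAt M M' t) :
    HasDerivAt (fun s => (of (M s)).det) (∑ j, ((of (M t)).updateRow j (M' j)).det) t := by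
  let D : ContinuousMultilinearMap ℝ (fun _ : ι => ι → 𝕜) 𝕜 :=
    { toMultilinearMap :=
        (detRowAlternating : (ι → 𝕜) [⋀^ι]→ₗ[𝕜] 𝕜).toMultilinearMap.restrictScalars ℝ
      cont := continuous_id.matrix_det }
  have := (D.hasFDerivAt (M t)).comp_hasDerivAt t hM
  rw [ContinuousMultilinearMap.linearDeriv_apply] at this
  exact this

theorem HasDerivAt.dotProduct_self {ι : Type*} [Fintype ι] {f : ℝ → ι → ℝ} {f' : ι → ℝ} {t : ℝ}
    (h : HasDerivAt f f' t) : HasDerivAt (fun s => f s ⬝ᵥ f s) (2 * (f' ⬝ᵥ f t)) t := by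
  refine (HasDerivAt.fun_sum (u := Finset.univ) fun i _ =>
    (hasDerivAt_pi.1 h i).fun_mul (hasDerivAt_pi.1 h i)).congr_deriv ?_
  simp only [dotProduct, Finset.mul_sum]
  exact Finset.sum_congr rfl fun i _ => by ring

theorem mul_inv_mul_exp_neg_eq_of_hasDerivAt {D N G g N' : ℝ → ℂ}
    (hD : ∀ t, HasDerivAt D ((g t + N' t / N t) * D t) t) (hN : ∀ t, HasDerivAt N (N' t) t)
    (hN0 : ∀ t, N t ≠ 0) (hG : ∀ t, HasDerivAt G (g t) t) (t₁ t₂ : ℝ) :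
    D t₁ * (N t₁)⁻¹ * Complex.exp (-G t₁) = D t₂ * (N t₂)⁻¹ * Complex.exp (-G t₂) := by
  have hderiv : ∀ t, HasDerivAt (fun s => D s * (N s)⁻¹ * Complex.exp (-G s)) 0 t := by
    intro t
    refine (((hD t).mul ((hN t).inv (hN0 t))).mul (hG t).neg.cexp).congr_deriv ?_
    simp only [Pi.mul_apply, Pi.inv_apply, Pi.neg_apply]
    field_simp [hN0 t]
    ring
  exact is_const_of_deriv_eq_zero (fun t => (hderiv t).differentiableAt)
    (fun t => (hderiv t).deriv) t₁ t₂

section Frame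

variable {n : ℕ}

noncomputable def frameRows (b : Fin (n - 1) → ℝ → Fin n → ℂ) (ξ : ℝ → Fin n → ℝ) (t : ℝ) :
    Fin n → Fin n → ℂ :=
  fun j => if h : (j : ℕ) < n - 1 then b ⟨j, h⟩ t else fun i => (ξ t i : ℂ)

theorem hasDerivAt_det_frameRows {b : Fin (n - 1) → ℝ → Fin n → ℂ} {ξ : ℝ → Fin n → ℝ}
    {A : Matrix (Fin n) (Fin n) ℂ} {ξ' : Fin n → ℝ} {t : ℝ}
    (hb : ∀ i, HasDerivAt (b i) (A *ᵥ b i t) t) (hξ : HasDerivAt ξ ξ' t) (hξ0 : ξ t ≠ 0)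
    (hperp : ∀ i, b i t ⬝ᵥ (fun j => (ξ t j : ℂ)) = 0)
    (hA : (A *ᵥ fun j => (ξ t j : ℂ)) ⬝ᵥ (fun j => (ξ t j : ℂ)) = -((ξ' ⬝ᵥ ξ t : ℝ) : ℂ)) :
    HasDerivAt (fun s => (of (frameRows b ξ s)).det)
      ((A.trace + ((2 * (ξ' ⬝ᵥ ξ t) : ℝ) : ℂ) / ((ξ t ⬝ᵥ ξ t : ℝ) : ℂ))
        * (of (frameRows b ξ t)).det) t := by
  have hn : 0 < n := Nat.pos_of_ne_zero fun h => by subst h; exact hξ0 (Subsingleton.elim _ _)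
  set last : Fin n := ⟨n - 1, by omega⟩
  set v : Fin n → ℂ := fun j => (ξ t j : ℂ)
  have hcast : ∀ w : Fin n → ℝ, (fun j => (w j : ℂ)) ⬝ᵥ v = ((w ⬝ᵥ ξ t : ℝ) : ℂ) := fun w =>
    (Complex.ofRealHom.map_dotProduct w (ξ t)).symm
  have hrow : ∀ j : Fin n, j ≠ last ↔ (j : ℕ) < n - 1 := fun j => by
    simp only [Ne, Fin.ext_iff, last]; omega
  set N : Fin n → Fin n → ℂ := fun j =>
    if h : (j : ℕ) < n - 1 then A *ᵥ b ⟨j, h⟩ t else fun i => (ξ' i : ℂ)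
  have hM : HasDerivAt (frameRows b ξ) N t := by
    refine hasDerivAt_pi.2 fun j => ?_
    by_cases h : (j : ℕ) < n - 1
    · simpa [frameRows, N, h] using hb ⟨j, h⟩
    · simpa [frameRows, N, h] using hasDerivAt_pi.2 fun i => (hasDerivAt_pi.1 hξ i).ofReal_comp
  have hlast : of (frameRows b ξ t) last = v := by
    show frameRows b ξ t last = v
    simp [frameRows, last, v]
  have hsum := sum_det_updateRow_of_dotProduct_eq_zero hlast (v := v) (A := A) (N := N)
    (fun j hj => by
      show frameRows b ξ t j ⬝ᵥ v = 0
      simpa [frameRows, (hrow j).1 hj] using hperp ⟨j, (hrow j).1 hj⟩)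
    (by rw [hcast, Complex.ofReal_ne_zero, Ne, dotProduct_self_eq_zero]; exact hξ0)
    (fun j hj => by
      show N j = A *ᵥ frameRows b ξ t j
      simp [frameRows, N, (hrow j).1 hj])
  refine hM.matrix_det.congr_deriv ?_
  rw [hsum]
  have hNlast : N last = fun i => (ξ' i : ℂ) := by simp [N, last]
  rw [hNlast, sub_dotProduct, hA, hcast, hcast]
  push_cast
  ring

end Frame

theorem stmt_3_general {n : ℕ}
    (u : (Fin n → ℝ) → (Fin n → ℝ))
    (a₀ : (Fin n → ℝ) → (Fin n → ℝ) → Matrix (Fin n) (Fin n) ℂ)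
    (ha₀ : ContinuousOn (fun p : (Fin n → ℝ) × (Fin n → ℝ) => a₀ p.1 p.2)
      {p | p.2 ≠ 0})
    (x : ℝ → Fin n → ℝ) (ξ : ℝ → Fin n → ℝ) (b : Fin (n - 1) → ℝ → Fin n → ℂ)
    (hξne : ∀ t, ξ t ≠ 0)
    (hx : ∀ t, HasDerivAt x (u (x t)) t)
    (hξ : ∀ t, HasDerivAt ξ (-((jacobian u (x t)).transpose.mulVec (ξ t))) t)
    (hb : ∀ i t, HasDerivAt (b i) ((a₀ (x t) (ξ t)).mulVec (b i t)) t)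
    (hconstraint : ∀ i t, (∑ j, b i t j * (ξ t j : ℂ)) = 0)
    (hrel : ∀ t,
      (∑ i, ((a₀ (x t) (ξ t)).mulVec fun j => (ξ t j : ℂ)) i * (ξ t i : ℂ))
        = ∑ i, (((jacobian u (x t)).mulVec (ξ t)) i : ℂ) * (ξ t i : ℂ)) :
    ∀ t₁ t₂ : ℝ,
      (Matrix.det (Matrix.of fun i (j : Fin n) =>
            if h : (j : ℕ) < n - 1 then b ⟨j, h⟩ t₁ i else (ξ t₁ i : ℂ)))
          * ((∑ i, ξ t₁ i ^ 2 : ℝ) : ℂ)⁻¹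
          * Complex.exp (-(∫ s in (0:ℝ)..t₁, Matrix.trace (a₀ (x s) (ξ s))))
      = (Matrix.det (Matrix.of fun i (j : Fin n) =>
            if h : (j : ℕ) < n - 1 then b ⟨j, h⟩ t₂ i else (ξ t₂ i : ℂ)))
          * ((∑ i, ξ t₂ i ^ 2 : ℝ) : ℂ)⁻¹
          * Complex.exp (-(∫ s in (0:ℝ)..t₂, Matrix.trace (a₀ (x s) (ξ s)))) := by
  have htr : Continuous fun s => (a₀ (x s) (ξ s)).trace :=
    (ha₀.comp_continuous ((continuous_iff_continuousAt.2 fun t => (hx t).continuousAt).prodMk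
      (continuous_iff_continuousAt.2 fun t => (hξ t).continuousAt)) hξne).matrix_trace
  have hcols : ∀ t, (of fun i (j : Fin n) =>
      if h : (j : ℕ) < n - 1 then b ⟨j, h⟩ t i else (ξ t i : ℂ)) = (of (frameRows b ξ t))ᵀ :=
    fun t => by ext i j; by_cases h : (j : ℕ) < n - 1 <;> simp [frameRows, h]
  have hnorm : ∀ t, ∑ i, ξ t i ^ 2 = ξ t ⬝ᵥ ξ t := fun t => by simp [dotProduct, sq]
  have hquad : ∀ t, (a₀ (x t) (ξ t) *ᵥ fun j => (ξ t j : ℂ)) ⬝ᵥ (fun j => (ξ t j : ℂ)) =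
      -((-((jacobian u (x t))ᵀ *ᵥ ξ t) ⬝ᵥ ξ t : ℝ) : ℂ) := fun t => by
    refine (hrel t).trans ?_
    rw [neg_dotProduct, Complex.ofReal_neg, neg_neg, mulVec_transpose, ← dotProduct_mulVec,
      dotProduct_comm]
    push_cast [dotProduct]
    rfl
  have hdet : ∀ t, HasDerivAt (fun s => (of (frameRows b ξ s)).det) _ t := fun t =>
    hasDerivAt_det_frameRows (hb · t) (hξ t) (hξne t) (hconstraint · t) (hquad t)
  intro t₁ t₂
  simp only [hcols, det_transpose, hnorm]
  exact mul_inv_mul_exp_neg_eq_of_hasDerivAt hdet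
    (fun t => ((hξ t).dotProduct_self).ofReal_comp)
    (fun t => by exact_mod_cast dotProduct_self_eq_zero.not.2 (hξne t))
    (fun t => (htr.integral_hasStrictDerivAt 0 t).hasDerivAt) t₁ t₂

/-- Conservation law for the bicharacteristic-amplitude system:
if the incompressibility constraint `bᵢ·ξ = 0` is preserved and
`(a₀ ξ)·ξ = (Du ξ)·ξ` along the bicharacteristic, then
`det[b₁,…,b_{n-1},ξ] · ‖ξ‖⁻² · exp(-∫₀ᵗ tr a₀)` is independent of `t`. -/
theorem stmt_3 {n : ℕ}
    (u : (Fin n → ℝ) → (Fin n → ℝ)) (hu : ContDiff ℝ 1 u)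
    (a₀ : (Fin n → ℝ) → (Fin n → ℝ) → Matrix (Fin n) (Fin n) ℂ)
    (ha₀ : ContinuousOn (fun p : (Fin n → ℝ) × (Fin n → ℝ) => a₀ p.1 p.2)
      {p | p.2 ≠ 0})
    (x : ℝ → Fin n → ℝ) (ξ : ℝ → Fin n → ℝ) (b : Fin (n - 1) → ℝ → Fin n → ℂ)
    (hξne : ∀ t, ξ t ≠ 0)
    (hx : ∀ t, HasDerivAt x (u (x t)) t)
    (hξ : ∀ t, HasDerivAt ξ (-((jacobian u (x t)).transpose.mulVec (ξ t))) t)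
    (hb : ∀ i t, HasDerivAt (b i) ((a₀ (x t) (ξ t)).mulVec (b i t)) t)
    (hconstraint : ∀ i t, (∑ j, b i t j * (ξ t j : ℂ)) = 0)
    (hrel : ∀ t,
      (∑ i, ((a₀ (x t) (ξ t)).mulVec fun j => (ξ t j : ℂ)) i * (ξ t i : ℂ))
        = ∑ i, (((jacobian u (x t)).mulVec (ξ t)) i : ℂ) * (ξ t i : ℂ)) :
    ∀ t₁ t₂ : ℝ,
      (Matrix.det (Matrix.of fun i (j : Fin n) =>
            if h : (j : ℕ) < n - 1 then b ⟨j, h⟩ t₁ i else (ξ t₁ i : ℂ)))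
          * ((∑ i, ξ t₁ i ^ 2 : ℝ) : ℂ)⁻¹
          * Complex.exp (-(∫ s in (0:ℝ)..t₁, Matrix.trace (a₀ (x s) (ξ s))))
      = (Matrix.det (Matrix.of fun i (j : Fin n) =>
            if h : (j : ℕ) < n - 1 then b ⟨j, h⟩ t₂ i else (ξ t₂ i : ℂ)))
          * ((∑ i, ξ t₂ i ^ 2 : ℝ) : ℂ)⁻¹
          * Complex.exp (-(∫ s in (0:ℝ)..t₂, Matrix.trace (a₀ (x s) (ξ s)))) :=
  stmt_3_general u a₀ ha₀ x ξ b hξne hx hξ hb hconstraint hrel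
end

section
/- Let u : ℝⁿ → ℝⁿ be a C¹ divergence-free vector field, i.e. tr Du(x) = 0 for all x. Let x, ξ be differentiable curves with x'(t) = u(x(t)), ξ'(t) = −(Du(x(t)))ᵀ ξ(t), and ξ(t) ≠ 0 for all t, and let b₁, …, b_{n−1} : ℝ → ℂⁿ be differentiable solutions of the amplitude equation of the linearized Euler equation in velocity form, bᵢ'(t) = (2 ξ(t)ξ(t)ᵀ/‖ξ(t)‖² − I) Du(x(t)) bᵢ(t), satisfying bᵢ(0)·ξ(0) = 0. Then the function t ↦ det[b₁(t), …, b_{n−1}(t), ξ(t)] is constant, where det[v₁, …, vₙ] denotes the determinant of the n×n complex matrix with columns v₁, …, vₙ (ξ(t) viewed in ℂⁿ). -/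
open Matrix

section Adjugate

variable {ι R : Type*} [Fintype ι] [DecidableEq ι] [CommRing R]

theorem Matrix.trace_adjugate_mul_eq_sum_det_updateCol (M V : Matrix ι ι R) :
    (M.adjugate * V).trace = ∑ j, (M.updateCol j (Vᵀ j)).det := by
  simp only [← cramer_apply, cramer_eq_adjugate_mulVec]
  rfl

theorem Matrix.trace_adjugate_mul_eq_sum_det_updateRow (M V : Matrix ι ι R) :
    (M.adjugate * V).trace = ∑ i, (M.updateRow i (V i)).det := by
  rw [← trace_transpose, transpose_mul, trace_mul_comm, adjugate_transpose,
    trace_adjugate_mul_eq_sum_det_updateCol]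
  simp only [transpose_transpose, updateCol_transpose, det_transpose]

theorem Matrix.trace_adjugate_mul_mul_self (M B : Matrix ι ι R) :
    (M.adjugate * (B * M)).trace = B.trace * M.det := by
  rw [trace_mul_comm, Matrix.mul_assoc, mul_adjugate, Matrix.mul_smul, Matrix.mul_one,
    trace_smul, smul_eq_mul, mul_comm]

end Adjugate

section Calculus

variable {𝕜 𝔸 ι : Type*} [NontriviallyNormedField 𝕜] [Fintype ι]

theorem HasDerivAt.dotProduct [NormedRing 𝔸] [NormedAlgebra 𝕜 𝔸] {f g : 𝕜 → ι → 𝔸}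
    {f' g' : ι → 𝔸} {t : 𝕜} (hf : HasDerivAt f f' t) (hg : HasDerivAt g g' t) :
    HasDerivAt (fun s => f s ⬝ᵥ g s) (f' ⬝ᵥ g t + f t ⬝ᵥ g') t := by
  have h := HasDerivAt.fun_sum (u := Finset.univ) fun i _ =>
    (hasDerivAt_pi.1 hf i).mul (hasDerivAt_pi.1 hg i)
  simp only [Pi.mul_apply, Finset.sum_add_distrib] at h
  exact h

theorem Matrix.hasDerivAt_det [DecidableEq ι] [NormedCommRing 𝔸] [NormedAlgebra 𝕜 𝔸]
    {M : 𝕜 → Matrix ι ι 𝔸} {M' : Matrix ι ι 𝔸} {t : 𝕜}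
    (hM : ∀ i j, HasDerivAt (fun s => M s i j) (M' i j) t) :
    HasDerivAt (fun s => (M s).det) ((M t).adjugate * M').trace t := by
  let detRows : ContinuousMultilinearMap 𝕜 (fun _ : ι => ι → 𝔸) 𝔸 :=
    { toMultilinearMap :=
        (detRowAlternating : (ι → 𝔸) [⋀^ι]→ₗ[𝔸] 𝔸).toMultilinearMap.restrictScalars 𝕜
      cont := continuous_id.matrix_det }
  have hrows : HasDerivAt (fun s i j => M s i j) M' t :=
    hasDerivAt_pi.2 fun i => hasDerivAt_pi.2 (hM i)
  rw [trace_adjugate_mul_eq_sum_det_updateRow]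
  refine ((detRows.hasFDerivAt fun i j => M t i j).comp_hasDerivAt t hrows).congr_deriv ?_
  exact (ContinuousMultilinearMap.linearDeriv_apply _ _ _).trans rfl

end Calculus

section LineReflection

variable {ι K : Type*} [Fintype ι] [DecidableEq ι] [Field K]

def lineReflection (ξ : ι → K) : Matrix ι ι K :=
  (2 / (ξ ⬝ᵥ ξ)) • vecMulVec ξ ξ - 1

theorem lineReflection_mulVec (ξ v : ι → K) :
    lineReflection ξ *ᵥ v = (2 / (ξ ⬝ᵥ ξ) * (ξ ⬝ᵥ v)) • ξ - v := by
  rw [lineReflection, sub_mulVec, one_mulVec, smul_mulVec, vecMulVec_mulVec, op_smul_eq_smul,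
    smul_smul]

theorem vecMul_lineReflection {ξ : ι → K} (hξ : ξ ⬝ᵥ ξ ≠ 0) : ξ ᵥ* lineReflection ξ = ξ := by
  rw [lineReflection, vecMul_sub, vecMul_smul, vecMul_vecMulVec, vecMul_one, smul_smul,
    div_mul_cancel₀ _ hξ, two_smul, add_sub_cancel_right]

theorem map_lineReflection {L : Type*} [Field L] (f : K →+* L) (ξ : ι → K) :
    (lineReflection ξ).map f = lineReflection (f ∘ ξ) := by
  ext i j
  simp [lineReflection, Matrix.one_apply, apply_ite f, ← RingHom.map_dotProduct, vecMulVec_apply,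
    map_ofNat]

end LineReflection

section SnocColMatrix

variable {m α R : Type*} {n : ℕ}

def snocColMatrix (n : ℕ) (b : Fin (n - 1) → m → α) (w : m → α) : Matrix m (Fin n) α :=
  of fun i j => if h : (j : ℕ) < n - 1 then b ⟨j, h⟩ i else w i

theorem transpose_snocColMatrix_of_lt (b : Fin (n - 1) → m → α) (w : m → α) {j : Fin n}
    (hj : (j : ℕ) < n - 1) : (snocColMatrix n b w)ᵀ j = b ⟨j, hj⟩ := by
  ext i
  simp [snocColMatrix, hj]

theorem transpose_snocColMatrix_of_not_lt (b : Fin (n - 1) → m → α) (w : m → α) {j : Fin n}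
    (hj : ¬(j : ℕ) < n - 1) : (snocColMatrix n b w)ᵀ j = w := by
  ext i
  simp [snocColMatrix, hj]

theorem mul_snocColMatrix [Fintype m] [NonUnitalNonAssocSemiring α] (D : Matrix m m α)
    (b : Fin (n - 1) → m → α) (w : m → α) :
    D * snocColMatrix n b w = snocColMatrix n (fun i => D *ᵥ b i) (D *ᵥ w) := by
  ext i j
  simp only [snocColMatrix, mul_apply, of_apply, mulVec, dotProduct]
  split_ifs <;> rfl

theorem snocColMatrix_sub [Sub α] (b b' : Fin (n - 1) → m → α) (w w' : m → α) :
    snocColMatrix n b w - snocColMatrix n b' w' = snocColMatrix n (b - b') (w - w') := by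
  ext i j
  simp only [snocColMatrix, Matrix.sub_apply, of_apply]
  split_ifs <;> rfl

theorem updateCol_snocColMatrix_of_not_lt (b : Fin (n - 1) → m → α) (w v : m → α) {j : Fin n}
    (hj : ¬(j : ℕ) < n - 1) : (snocColMatrix n b w).updateCol j v = snocColMatrix n b v := by
  ext i k
  by_cases hk : k = j
  · subst hk
    simp [snocColMatrix, hj]
  · have hk' : (k : ℕ) < n - 1 := by
      have := Fin.val_ne_of_ne hk
      omega
    simp [snocColMatrix, updateCol_ne hk, hk']

theorem det_updateCol_snocColMatrix_smul_last [CommRing R] (b : Fin (n - 1) → Fin n → R)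
    (w : Fin n → R) {j : Fin n} (hj : (j : ℕ) < n - 1) (c : R) :
    ((snocColMatrix n b w).updateCol j (c • w)).det = 0 := by
  set last : Fin n := ⟨n - 1, by omega⟩
  have hlast : ¬(last : ℕ) < n - 1 := lt_irrefl _
  have hne : j ≠ last := fun h => hlast (h ▸ hj)
  rw [det_updateCol_smul, det_zero_of_column_eq hne, mul_zero]
  intro k
  rw [updateCol_self, updateCol_ne hne.symm]
  exact (congrFun (transpose_snocColMatrix_of_not_lt b w hlast) k).symm

theorem det_snocColMatrix_eq_zero_of_forall_dotProduct_eq_zero [CommRing R] [IsDomain R]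
    {b : Fin (n - 1) → Fin n → R} {w ξ : Fin n → R} (hξ : ξ ≠ 0) (hb : ∀ i, b i ⬝ᵥ ξ = 0)
    (hw : w ⬝ᵥ ξ = 0) : (snocColMatrix n b w).det = 0 := by
  refine exists_vecMul_eq_zero_iff.mp ⟨ξ, hξ, funext fun j => ?_⟩
  change ξ ⬝ᵥ (snocColMatrix n b w)ᵀ j = 0
  rw [dotProduct_comm]
  by_cases hj : (j : ℕ) < n - 1
  · rw [transpose_snocColMatrix_of_lt b w hj, hb]
  · rw [transpose_snocColMatrix_of_not_lt b w hj, hw]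

theorem trace_adjugate_mul_snocColMatrix_eq_zero [CommRing R] [IsDomain R]
    {b : Fin (n - 1) → Fin n → R} {ξ v : Fin n → R} (hξ : ξ ≠ 0) (hb : ∀ i, b i ⬝ᵥ ξ = 0)
    (c : Fin (n - 1) → R) (hv : v ⬝ᵥ ξ = 0) :
    ((snocColMatrix n b ξ).adjugate * snocColMatrix n (fun i => c i • ξ) v).trace = 0 := by
  rw [trace_adjugate_mul_eq_sum_det_updateCol]
  refine Finset.sum_eq_zero fun j _ => ?_
  by_cases hj : (j : ℕ) < n - 1
  · rw [transpose_snocColMatrix_of_lt _ _ hj]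
    exact det_updateCol_snocColMatrix_smul_last b ξ hj _
  · rw [transpose_snocColMatrix_of_not_lt _ _ hj, updateCol_snocColMatrix_of_not_lt _ _ _ hj]
    exact det_snocColMatrix_eq_zero_of_forall_dotProduct_eq_zero hξ hb hv

end SnocColMatrix

theorem trace_adjugate_mul_linearizedEuler_eq_zero {K : Type*} [Field K] {n : ℕ}
    {D : Matrix (Fin n) (Fin n) K} (hD : D.trace = 0) {ξ : Fin n → K} (hξ : ξ ⬝ᵥ ξ ≠ 0)
    {b : Fin (n - 1) → Fin n → K} (hb : ∀ i, b i ⬝ᵥ ξ = 0) :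
    ((snocColMatrix n b ξ).adjugate *
      snocColMatrix n (fun i => (lineReflection ξ * D) *ᵥ b i) (-(Dᵀ *ᵥ ξ))).trace = 0 := by
  have hξ0 : ξ ≠ 0 := by
    rintro rfl
    simp at hξ
  have hskew : (D *ᵥ ξ - Dᵀ *ᵥ ξ) ⬝ᵥ ξ = 0 := by
    rw [sub_dotProduct, mulVec_transpose, dotProduct_comm (D *ᵥ ξ), dotProduct_mulVec, sub_self]
  have hsplit : snocColMatrix n (fun i => (lineReflection ξ * D) *ᵥ b i) (-(Dᵀ *ᵥ ξ)) =
      snocColMatrix n (fun i => (2 / (ξ ⬝ᵥ ξ) * (ξ ⬝ᵥ D *ᵥ b i)) • ξ) (D *ᵥ ξ - Dᵀ *ᵥ ξ) -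
        D * snocColMatrix n b ξ := by
    rw [mul_snocColMatrix, snocColMatrix_sub, sub_sub_cancel_left]
    congr 1
    funext i
    rw [← mulVec_mulVec, lineReflection_mulVec]
    rfl
  rw [hsplit, Matrix.mul_sub, trace_sub, trace_adjugate_mul_mul_self, hD, zero_mul, sub_zero]
  exact trace_adjugate_mul_snocColMatrix_eq_zero hξ0 hb _ hskew

theorem dotProduct_eq_of_hasDerivAt {𝔸 ι : Type*} [NormedCommRing 𝔸] [NormedAlgebra ℝ 𝔸]
    [Fintype ι] {A D : ℝ → Matrix ι ι 𝔸} {b ξ : ℝ → ι → 𝔸}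
    (hb : ∀ t, HasDerivAt b (A t *ᵥ b t) t) (hξ : ∀ t, HasDerivAt ξ (-((D t)ᵀ *ᵥ ξ t)) t)
    (hAD : ∀ t, ξ t ᵥ* A t = ξ t ᵥ* D t) (t s : ℝ) : b t ⬝ᵥ ξ t = b s ⬝ᵥ ξ s := by
  have hderiv : ∀ t, HasDerivAt (fun t => b t ⬝ᵥ ξ t) 0 t := by
    intro t
    convert (hb t).dotProduct (hξ t) using 1
    rw [dotProduct_neg, mulVec_transpose, dotProduct_comm (A t *ᵥ b t), dotProduct_mulVec, hAD,
      dotProduct_comm (b t), add_neg_cancel]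
  exact is_const_of_deriv_eq_zero (fun t => (hderiv t).differentiableAt)
    (fun t => (hderiv t).deriv) t s

theorem det_snocColMatrix_eq_of_linearizedEuler {𝕜 : Type*} [NormedField 𝕜] [NormedAlgebra ℝ 𝕜]
    {n : ℕ} {D : ℝ → Matrix (Fin n) (Fin n) 𝕜} (hD : ∀ t, (D t).trace = 0)
    {ξ : ℝ → Fin n → 𝕜} (hξ0 : ∀ t, ξ t ⬝ᵥ ξ t ≠ 0)
    (hξ : ∀ t, HasDerivAt ξ (-((D t)ᵀ *ᵥ ξ t)) t) {b : Fin (n - 1) → ℝ → Fin n → 𝕜}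
    (hb : ∀ i t, HasDerivAt (b i) ((lineReflection (ξ t) * D t) *ᵥ b i t) t)
    (hb0 : ∀ i, b i 0 ⬝ᵥ ξ 0 = 0) (t s : ℝ) :
    (snocColMatrix n (fun i => b i t) (ξ t)).det =
      (snocColMatrix n (fun i => b i s) (ξ s)).det := by
  have horth : ∀ i t, b i t ⬝ᵥ ξ t = 0 := fun i t =>
    (dotProduct_eq_of_hasDerivAt (hb i) hξ
      (fun t => by rw [← vecMul_vecMul, vecMul_lineReflection (hξ0 t)]) t 0).trans (hb0 i)
  have hentries : ∀ t i j, HasDerivAt (fun s => snocColMatrix n (fun k => b k s) (ξ s) i j)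
      (snocColMatrix n (fun k => (lineReflection (ξ t) * D t) *ᵥ b k t) (-((D t)ᵀ *ᵥ ξ t)) i j)
      t := by
    intro t i j
    by_cases hj : (j : ℕ) < n - 1
    · simpa [snocColMatrix, hj] using hasDerivAt_pi.1 (hb ⟨j, hj⟩ t) i
    · simpa [snocColMatrix, hj] using hasDerivAt_pi.1 (hξ t) i
  have hderiv : ∀ t, HasDerivAt (fun s => (snocColMatrix n (fun i => b i s) (ξ s)).det) 0 t :=
    fun t => by
      simpa only [trace_adjugate_mul_linearizedEuler_eq_zero (hD t) (hξ0 t) (horth · t)] using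
        hasDerivAt_det (hentries t)
  exact is_const_of_deriv_eq_zero (fun t => (hderiv t).differentiableAt)
    (fun t => (hderiv t).deriv) t s

theorem stmt_4_general {n : ℕ}
    (u : (Fin n → ℝ) → (Fin n → ℝ))
    (hdiv : ∀ y, Matrix.trace (jacobian u y) = 0)
    (x : ℝ → Fin n → ℝ) (ξ : ℝ → Fin n → ℝ) (b : Fin (n - 1) → ℝ → Fin n → ℂ)
    (hξne : ∀ t, ξ t ≠ 0)
    (hξ : ∀ t, HasDerivAt ξ (-((jacobian u (x t)).transpose.mulVec (ξ t))) t)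
    (hb : ∀ i t, HasDerivAt (b i)
      (((((2 / (∑ j, ξ t j ^ 2)) • Matrix.vecMulVec (ξ t) (ξ t) - 1)
          * jacobian u (x t)).map Complex.ofReal).mulVec (b i t)) t)
    (hb0 : ∀ i, (∑ j, b i 0 j * (ξ 0 j : ℂ)) = 0) :
    ∀ t₁ t₂ : ℝ,
      Matrix.det (Matrix.of fun i (j : Fin n) =>
          if h : (j : ℕ) < n - 1 then b ⟨j, h⟩ t₁ i else (ξ t₁ i : ℂ))
      = Matrix.det (Matrix.of fun i (j : Fin n) =>
          if h : (j : ℕ) < n - 1 then b ⟨j, h⟩ t₂ i else (ξ t₂ i : ℂ)) := by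
  let ξc : ℝ → Fin n → ℂ := fun t => Complex.ofRealHom ∘ ξ t
  let D : ℝ → Matrix (Fin n) (Fin n) ℂ := fun t => (jacobian u (x t)).map Complex.ofRealHom
  have hP : ∀ t, (2 / ∑ j, ξ t j ^ 2) • vecMulVec (ξ t) (ξ t) - 1 = lineReflection (ξ t) := by
    intro t
    simp only [lineReflection, dotProduct, sq]
  have hξc : ∀ t, HasDerivAt ξc (-((D t)ᵀ *ᵥ ξc t)) t := by
    intro t
    refine hasDerivAt_pi.2 fun i => ?_
    have h := (hasDerivAt_pi.1 (hξ t) i).ofReal_comp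
    rwa [Pi.neg_apply, Complex.ofReal_neg, ← Complex.ofRealHom_eq_coe, RingHom.map_mulVec,
      transpose_map] at h
  have hA : ∀ t, (lineReflection (ξ t) * jacobian u (x t)).map Complex.ofReal =
      lineReflection (ξc t) * D t := fun t => by
    rw [← map_lineReflection]
    exact Matrix.map_mul (f := Complex.ofRealHom)
  intro t₁ t₂
  exact det_snocColMatrix_eq_of_linearizedEuler (D := D) (ξ := ξc)
    (fun t => by simp [D, ← AddMonoidHom.map_trace, hdiv])
    (fun t => by simpa [ξc, ← RingHom.map_dotProduct] using hξne t)
    hξc (fun i t => by simpa only [hP, hA] using hb i t) hb0 t₁ t₂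

/-- For the linearized Euler equation in velocity form
(`bᵢ' = (2ξξᵀ/‖ξ‖² − I) Du(x) bᵢ`) with a divergence-free `u`, the determinant
`det[b₁,…,b_{n−1},ξ]` is conserved. -/
theorem stmt_4 {n : ℕ}
    (u : (Fin n → ℝ) → (Fin n → ℝ)) (hu : ContDiff ℝ 1 u)
    (hdiv : ∀ y, Matrix.trace (jacobian u y) = 0)
    (x : ℝ → Fin n → ℝ) (ξ : ℝ → Fin n → ℝ) (b : Fin (n - 1) → ℝ → Fin n → ℂ)
    (hξne : ∀ t, ξ t ≠ 0)
    (hx : ∀ t, HasDerivAt x (u (x t)) t)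
    (hξ : ∀ t, HasDerivAt ξ (-((jacobian u (x t)).transpose.mulVec (ξ t))) t)
    (hb : ∀ i t, HasDerivAt (b i)
      (((((2 / (∑ j, ξ t j ^ 2)) • Matrix.vecMulVec (ξ t) (ξ t) - 1)
          * jacobian u (x t)).map Complex.ofReal).mulVec (b i t)) t)
    (hb0 : ∀ i, (∑ j, b i 0 j * (ξ 0 j : ℂ)) = 0) :
    ∀ t₁ t₂ : ℝ,
      Matrix.det (Matrix.of fun i (j : Fin n) =>
          if h : (j : ℕ) < n - 1 then b ⟨j, h⟩ t₁ i else (ξ t₁ i : ℂ))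
      = Matrix.det (Matrix.of fun i (j : Fin n) =>
          if h : (j : ℕ) < n - 1 then b ⟨j, h⟩ t₂ i else (ξ t₂ i : ℂ)) :=
  stmt_4_general u hdiv x ξ b hξne hξ hb hb0
end

section
/- Let E be a finite-dimensional complex normed space, P : ℝ → L(E) continuously differentiable with P(t)² = P(t) for all t, and A : ℝ → L(E) continuous. If b : ℝ → E is differentiable and satisfies b'(t) = (P(t) A(t) + P'(t)) b(t) for all t, and P(0) b(0) = b(0), then P(t) b(t) = b(t) for all t ∈ ℝ. -/
open Set

/-! The complementary component `r = b - P b` solves the linear equation `r' = -P' r`: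
differentiating `P² = P` gives `P' = P' P + P P'`, and `1 - P` annihilates the `P A` part of the
equation for `b`. As `r 0 = 0` and `P'` is continuous, hence locally bounded, uniqueness of
solutions of linear ODEs (Grönwall) forces `r = 0`. -/

section Idempotent

variable {𝕜 𝔸 : Type*} [NontriviallyNormedField 𝕜] [NormedRing 𝔸] [NormedAlgebra 𝕜 𝔸]

theorem HasDerivAt.eq_mul_add_mul_of_isIdempotentElem {p : 𝕜 → 𝔸} {p' : 𝔸} {t : 𝕜}
    (hp : HasDerivAt p p' t) (hidem : ∀ s, IsIdempotentElem (p s)) :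
    p' = p' * p t + p t * p' := by
  have hsq : HasDerivAt (fun s => p s * p s) (p' * p t + p t * p') t := hp.mul hp
  simp only [fun s => (hidem s).eq] at hsq
  exact hp.unique hsq

end Idempotent

section Complement

variable {𝕜 E : Type*} [NontriviallyNormedField 𝕜] [NormedAddCommGroup E] [NormedSpace 𝕜 E]

theorem HasDerivAt.sub_apply_of_isIdempotentElem {P : 𝕜 → E →L[𝕜] E} {P' : E →L[𝕜] E}
    {t : 𝕜} (hP : HasDerivAt P P' t) (hidem : ∀ s, IsIdempotentElem (P s))
    {b : 𝕜 → E} {A : E →L[𝕜] E} (hb : HasDerivAt b ((P t * A + P') (b t)) t) :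
    HasDerivAt (fun s => b s - P s (b s)) (-P' (b t - P t (b t))) t := by
  convert hb.fun_sub (hP.clm_apply hb) using 1
  have hP' : P' - P' * P t = P t * P' := by
    nth_rewrite 1 [hP.eq_mul_add_mul_of_isIdempotentElem hidem]
    abel
  have key : P t * A + P' - (P' + P t * (P t * A + P')) = -(P' - P' * P t) := by
    rw [hP', mul_add, ← mul_assoc, (hidem t).eq]
    abel
  simpa using congr($key (b t)).symm

end Complement

section LinearODE

variable {𝕜 E : Type*} [NontriviallyNormedField 𝕜] [NormedAddCommGroup E] [NormedSpace 𝕜 E]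
  [NormedSpace ℝ E]

theorem eq_zero_of_hasDerivAt_clm_apply {B : ℝ → E →L[𝕜] E} (hB : Continuous B) {r : ℝ → E}
    (hr : ∀ t, HasDerivAt r (B t (r t)) t) {t₀ : ℝ} (hr₀ : r t₀ = 0) (t : ℝ) : r t = 0 := by
  obtain ⟨a, b, ht, ht₀⟩ : ∃ a b, t ∈ Ioo a b ∧ t₀ ∈ Ioo a b :=
    ⟨min t t₀ - 1, max t t₀ + 1, by grind, by grind⟩
  obtain ⟨K, hK⟩ : BddAbove ((fun s => ‖B s‖₊) '' Icc a b) :=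
    (isCompact_Icc.image_of_continuousOn hB.nnnorm.continuousOn).bddAbove
  have hlip : ∀ s ∈ Ioo a b, LipschitzOnWith K (B s) univ := fun s hs =>
    ((B s).lipschitz.weaken (hK ⟨s, Ioo_subset_Icc_self hs, rfl⟩)).lipschitzOnWith
  exact ODE_solution_unique_of_mem_Ioo (g := 0) hlip ht₀
    (fun s _ => ⟨hr s, trivial⟩) (fun s _ => ⟨by simp, trivial⟩)
    hr₀ ht

end LinearODE

theorem stmt_9_general {E : Type*} [NormedAddCommGroup E] [NormedSpace ℂ E]
    (P P' : ℝ → E →L[ℂ] E)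
    (hP : ∀ t, HasDerivAt P (P' t) t) (hP'cont : Continuous P')
    (hproj : ∀ t, (P t).comp (P t) = P t)
    (A : ℝ → E →L[ℂ] E)
    (b : ℝ → E)
    (hb : ∀ t, HasDerivAt b (((P t).comp (A t) + P' t) (b t)) t)
    (hb0 : P 0 (b 0) = b 0) :
    ∀ t : ℝ, P t (b t) = b t := by
  let Q : ℝ → E →L[ℝ] E := fun t => (P t).restrictScalars ℝ
  have hQ : ∀ t, HasDerivAt Q ((P' t).restrictScalars ℝ) t := fun t =>
    (ContinuousLinearMap.restrictScalarsL ℂ E E ℝ ℝ).hasFDerivAt.comp_hasDerivAt t (hP t)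
  have hQidem : ∀ t, IsIdempotentElem (Q t) := fun t => congr(($(hproj t)).restrictScalars ℝ)
  have hr : ∀ t, HasDerivAt (fun s => b s - P s (b s)) ((-P' t) (b t - P t (b t))) t :=
    fun t => (hQ t).sub_apply_of_isIdempotentElem hQidem (A := (A t).restrictScalars ℝ) (hb t)
  intro t
  have hr₀ : b 0 - P 0 (b 0) = 0 := by rw [hb0, sub_self]
  exact (sub_eq_zero.mp (eq_zero_of_hasDerivAt_clm_apply hP'cont.neg hr hr₀ t)).symm

/-- If `P` is a C¹ curve of projections, `A` a continuous curve of
operators, and `b` solves `b' = (P A + P') b` with `P(0) b(0) = b(0)`, then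
`P(t) b(t) = b(t)` for all `t`: the modified amplitude equation preserves the
constraint `b(t) ∈ Range P(t)`. -/
theorem stmt_9 {E : Type*} [NormedAddCommGroup E] [NormedSpace ℂ E]
    [FiniteDimensional ℂ E]
    (P P' : ℝ → E →L[ℂ] E)
    (hP : ∀ t, HasDerivAt P (P' t) t) (hP'cont : Continuous P')
    (hproj : ∀ t, (P t).comp (P t) = P t)
    (A : ℝ → E →L[ℂ] E) (hA : Continuous A)
    (b : ℝ → E)
    (hb : ∀ t, HasDerivAt b (((P t).comp (A t) + P' t) (b t)) t)
    (hb0 : P 0 (b 0) = b 0) :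
    ∀ t : ℝ, P t (b t) = b t :=
  stmt_9_general P P' hP hP'cont hproj A b hb hb0
end

section
/- Let A be a real n×n matrix, a₀ a complex n×n matrix, and ξ : ℝ → ℝⁿ∖{0} a curve differentiable at t₀ with ξ'(t₀) = −Aᵀ ξ(t₀). Let P(η) = I − ηηᵀ/‖η‖² for η ∈ ℝⁿ∖{0} (the orthogonal projection onto the hyperplane η^⊥), and let P'(t₀) denote the derivative at t₀ of the matrix-valued curve t ↦ P(ξ(t)). Then for every b ∈ ℂⁿ with b·ξ(t₀) = 0, (P(ξ(t₀)) a₀ + P'(t₀)) b = (a₀ + (ξ(t₀)ξ(t₀)ᵀ/‖ξ(t₀)‖²)(A − a₀)) b; that is, on divergence-free amplitudes the general constraint-preserving modification p·a₀ + p_t of the symbol a₀ coincides with a₀ + (ξ⊗ξ/‖ξ‖²)(A − a₀). -/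
/-!
Write `Q = ξξᵀ/‖ξ‖²`, so that `P = I - Q` and `P' = -Q'`. Differentiating with `v = ξ' = -Aᵀξ`,
`Q' = (vξᵀ + ξvᵀ)/‖ξ‖² - (2 ξ·v/‖ξ‖⁴) ξξᵀ`. Since `ξvᵀ = -ξξᵀA`, the middle term is `-QA`, and
all remaining terms have the form `wξᵀ`, which annihilates every `b` with `b·ξ = 0`. Hence
`P'b = QAb`, and `P a₀ b + P'b = a₀b + Q(A - a₀)b`.
-/

open Matrix

section

variable {ι : Type*} [Fintype ι]

noncomputable def lineProj (x : ι → ℝ) : Matrix ι ι ℝ :=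
  (∑ l, x l ^ 2)⁻¹ • vecMulVec x x

noncomputable def lineProjDeriv (x v : ι → ℝ) : Matrix ι ι ℝ :=
  (∑ l, x l ^ 2)⁻¹ • (vecMulVec v x + vecMulVec x v)
    - (2 * (x ⬝ᵥ v) / (∑ l, x l ^ 2) ^ 2) • vecMulVec x x

lemma sum_sq_ne_zero {x : ι → ℝ} (hx : x ≠ 0) : ∑ l, x l ^ 2 ≠ 0 := by
  simpa [dotProduct, sq] using (dotProduct_self_eq_zero (v := x)).not.mpr hx

lemma hasDerivAt_sum_sq {ξ : ℝ → ι → ℝ} {v : ι → ℝ} {t₀ : ℝ} (hξ : HasDerivAt ξ v t₀) :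
    HasDerivAt (fun t => ∑ l, ξ t l ^ 2) (2 * (ξ t₀ ⬝ᵥ v)) t₀ := by
  refine (HasDerivAt.fun_sum fun l _ => (hasDerivAt_pi.mp hξ l).fun_pow 2).congr_deriv ?_
  simp [dotProduct, Finset.mul_sum, mul_assoc]

lemma hasDerivAt_lineProj_apply {ξ : ℝ → ι → ℝ} {v : ι → ℝ} {t₀ : ℝ}
    (hξ : HasDerivAt ξ v t₀) (hs : ∑ l, ξ t₀ l ^ 2 ≠ 0) (i j : ι) :
    HasDerivAt (fun t => lineProj (ξ t) i j) (lineProjDeriv (ξ t₀) v i j) t₀ := by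
  have hcomp := hasDerivAt_pi.mp hξ
  refine (((hasDerivAt_sum_sq hξ).inv hs).mul ((hcomp i).mul (hcomp j))).congr_deriv ?_
  simp only [lineProjDeriv, Matrix.sub_apply, Matrix.smul_apply, Matrix.add_apply,
    vecMulVec_apply, smul_eq_mul, Pi.mul_apply, Pi.inv_apply]
  ring

lemma neg_lineProjDeriv_neg_transpose_mulVec (x : ι → ℝ) (A : Matrix ι ι ℝ) :
    -lineProjDeriv x (-(Aᵀ *ᵥ x)) = lineProj x * A
      + vecMulVec ((∑ l, x l ^ 2)⁻¹ • Aᵀ *ᵥ x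
        - (2 * (x ⬝ᵥ Aᵀ *ᵥ x) / (∑ l, x l ^ 2) ^ 2) • x) x := by
  rw [lineProj, Matrix.smul_mul, vecMulVec_mul, ← mulVec_transpose, lineProjDeriv]
  ext i j
  simp only [Matrix.neg_apply, Matrix.sub_apply, Matrix.smul_apply, Matrix.add_apply,
    vecMulVec_apply, smul_eq_mul, Pi.sub_apply, Pi.smul_apply, Pi.neg_apply, dotProduct_neg]
  ring

lemma vecMulVec_map_ofReal_mulVec_eq_zero {w x : ι → ℝ} {b : ι → ℂ}
    (hb : ∑ i, b i * (x i : ℂ) = 0) :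
    (vecMulVec w x).map Complex.ofReal *ᵥ b = 0 := by
  have hmap : (vecMulVec w x).map Complex.ofReal
      = vecMulVec (fun i => (w i : ℂ)) (fun i => (x i : ℂ)) := by
    ext; simp [vecMulVec_apply]
  rw [hmap, vecMulVec_mulVec, dotProduct_comm]
  simp [dotProduct, hb]

end

/-- Along a solution of `ξ' = −Aᵀξ`, on amplitudes `b` with `b·ξ = 0`,
the constraint-preserving modification `p·a₀ + p_t` of the symbol `a₀` (where
`p(η) = I − ηηᵀ/‖η‖²`) coincides with `a₀ + (ξ⊗ξ/‖ξ‖²)(A − a₀)`. -/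
theorem stmt_11 {n : ℕ}
    (A : Matrix (Fin n) (Fin n) ℝ) (a₀ : Matrix (Fin n) (Fin n) ℂ)
    (ξ : ℝ → Fin n → ℝ) (hξne : ∀ t, ξ t ≠ 0) (t₀ : ℝ)
    (hξ : HasDerivAt ξ (-(A.transpose.mulVec (ξ t₀))) t₀)
    (P' : Matrix (Fin n) (Fin n) ℝ)
    (hP' : ∀ i j, HasDerivAt
      (fun t => ((1 : Matrix (Fin n) (Fin n) ℝ)
        - (∑ l, ξ t l ^ 2)⁻¹ • Matrix.vecMulVec (ξ t) (ξ t)) i j) (P' i j) t₀) :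
    ∀ b : Fin n → ℂ, (∑ i, b i * (ξ t₀ i : ℂ)) = 0 →
      ((((1 : Matrix (Fin n) (Fin n) ℝ)
            - (∑ l, ξ t₀ l ^ 2)⁻¹ • Matrix.vecMulVec (ξ t₀) (ξ t₀)).map Complex.ofReal)
          * a₀ + P'.map Complex.ofReal).mulVec b
      = (a₀ + (((∑ l, ξ t₀ l ^ 2)⁻¹ • Matrix.vecMulVec (ξ t₀) (ξ t₀)).map Complex.ofReal)
          * (A.map Complex.ofReal - a₀)).mulVec b := by
  intro b hb
  rw [show (∑ l, ξ t₀ l ^ 2)⁻¹ • vecMulVec (ξ t₀) (ξ t₀) = lineProj (ξ t₀) from rfl]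
  have hs := sum_sq_ne_zero (hξne t₀)
  have hP'_eq : P' = -lineProjDeriv (ξ t₀) (-(Aᵀ *ᵥ ξ t₀)) :=
    Matrix.ext fun i j => (hP' i j).unique ((hasDerivAt_lineProj_apply hξ hs i j).const_sub _)
  have hmul : (lineProj (ξ t₀) * A).map Complex.ofReal
      = (lineProj (ξ t₀)).map Complex.ofReal * A.map Complex.ofReal :=
    Matrix.map_mul (f := Complex.ofRealHom)
  rw [hP'_eq, neg_lineProjDeriv_neg_transpose_mulVec, Matrix.map_add _ Complex.ofReal_add, hmul,
    ← add_assoc, add_mulVec, vecMulVec_map_ofReal_mulVec_eq_zero hb, add_zero,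
    Matrix.map_sub _ Complex.ofReal_sub, Matrix.map_one _ Complex.ofReal_zero Complex.ofReal_one]
  noncomm_ring
end

section
/- Let n, d ≥ 1, ξ₀ ∈ ℤⁿ∖{0}, and let a₀, a₁ assign to each x ∈ ℝⁿ and ξ ∈ ℝⁿ∖{0} a d×d complex matrix. Assume: a₀ is positively 0-homogeneous in ξ (a₀(x, sξ) = a₀(x, ξ) for all s > 0) and there is L > 0 with ‖a₀(x,ξ) − a₀(x,η)‖ ≤ L‖ξ − η‖ for all x and all ξ, η in the ball of radius 1/2 around ξ₀; and there is C₁ > 0 with ‖a₁(x,ξ)‖ ≤ C₁/‖ξ‖ for all x and all ξ with ‖ξ‖ ≥ 1. Let S ⊂ ℤⁿ be a finite set, b̂_k ∈ ℂᵈ for k ∈ S, b(x) = Σ_{k∈S} b̂_k e^{i k·x}, and f_N(x) = b(x) e^{i N ξ₀·x} for N ∈ ℕ. Define the pseudodifferential operator A on trigonometric polynomials f(x) = Σ_k f̂(k) e^{i k·x} by (A f)(x) = Σ_{k ∈ ℤⁿ∖{0}} (a₀ + a₁)(x, k) f̂(k) e^{i k·x}. Then there exist C > 0 and N₀ ∈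 ℕ such that for all N ≥ N₀ and all x ∈ ℝⁿ, ‖(A f_N)(x) − a₀(x, ξ₀) b(x) e^{i N ξ₀·x}‖ ≤ C/N. -/
/-- Euclidean norm of a complex vector. -/
noncomputable def ecnorm {d : ℕ} (v : Fin d → ℂ) : ℝ :=
  Real.sqrt (∑ j, ‖v j‖ ^ 2)

/-- Euclidean norm of a real vector. -/
noncomputable def ernorm {n : ℕ} (v : Fin n → ℝ) : ℝ :=
  Real.sqrt (∑ i, v i ^ 2)

/-- Operator (Euclidean) norm of a complex `d × d` matrix. -/
noncomputable def mopnorm {d : ℕ} (M : Matrix (Fin d) (Fin d) ℂ) : ℝ :=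
  ‖LinearMap.toContinuousLinearMap (Matrix.toEuclideanLin M)‖

/-! The frequencies of `f_N` are `k + N ξ₀` with `k` in the finite set `S`. By 0-homogeneity,
`a₀(x, k + N ξ₀) = a₀(x, ξ₀ + k / N)`, which the Lipschitz bound places within `L ‖k‖ / N` of
`a₀(x, ξ₀)`; and once `N ≥ 2 ‖k‖`, `‖k + N ξ₀‖ ≥ N / 2`, so `‖a₁(x, k + N ξ₀)‖ ≤ 2 C₁ / N`.
Factoring the phase `e^{i N ξ₀·x}` out of each mode, the error is a finite sum of unimodular
multiples of these `O(1/N)` matrices applied to the `b̂_k`. -/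

open Matrix

variable {n d : ℕ}

lemma ernorm_eq_norm (v : Fin n → ℝ) : ernorm v = ‖WithLp.toLp 2 v‖ := by
  simp [ernorm, EuclideanSpace.norm_eq]

lemma ecnorm_eq_norm (v : Fin d → ℂ) : ecnorm v = ‖WithLp.toLp 2 v‖ := by
  simp [ecnorm, EuclideanSpace.norm_eq]

lemma ernorm_nonneg (v : Fin n → ℝ) : 0 ≤ ernorm v := Real.sqrt_nonneg _

lemma ecnorm_nonneg (v : Fin d → ℂ) : 0 ≤ ecnorm v := Real.sqrt_nonneg _

lemma ernorm_zero : ernorm (0 : Fin n → ℝ) = 0 := by simp [ernorm]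

lemma ernorm_smul (c : ℝ) (v : Fin n → ℝ) : ernorm (c • v) = |c| * ernorm v := by
  rw [ernorm_eq_norm, ernorm_eq_norm, WithLp.toLp_smul, norm_smul, Real.norm_eq_abs]

lemma ernorm_sub_ernorm_le (u v : Fin n → ℝ) : ernorm u - ernorm v ≤ ernorm (v + u) := by
  simp only [ernorm_eq_norm, WithLp.toLp_add]
  have := norm_sub_le (WithLp.toLp 2 v + WithLp.toLp 2 u) (WithLp.toLp 2 v)
  rw [add_sub_cancel_left] at this
  linarith

lemma abs_le_ernorm (v : Fin n → ℝ) (i : Fin n) : |v i| ≤ ernorm v := by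
  simpa [ernorm_eq_norm] using PiLp.norm_apply_le (WithLp.toLp 2 v) i

lemma one_le_ernorm_intCast {ξ : Fin n → ℤ} (hξ : ξ ≠ 0) :
    1 ≤ ernorm (fun i => (ξ i : ℝ)) := by
  obtain ⟨i, hi⟩ := Function.ne_iff.1 hξ
  have : (1 : ℝ) ≤ |(ξ i : ℝ)| := by exact_mod_cast Int.one_le_abs hi
  exact this.trans (abs_le_ernorm (fun i => (ξ i : ℝ)) i)

lemma ecnorm_smul (c : ℂ) (v : Fin d → ℂ) : ecnorm (c • v) = ‖c‖ * ecnorm v := by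
  rw [ecnorm_eq_norm, ecnorm_eq_norm, WithLp.toLp_smul, norm_smul]

lemma ecnorm_sum_le {ι : Type*} (s : Finset ι) (f : ι → Fin d → ℂ) :
    ecnorm (∑ k ∈ s, f k) ≤ ∑ k ∈ s, ecnorm (f k) := by
  simpa only [ecnorm_eq_norm, WithLp.toLp_sum] using norm_sum_le s fun k => WithLp.toLp 2 (f k)

lemma ecnorm_mulVec_le (M : Matrix (Fin d) (Fin d) ℂ) (v : Fin d → ℂ) :
    ecnorm (M *ᵥ v) ≤ mopnorm M * ecnorm v := by
  rw [ecnorm_eq_norm, ecnorm_eq_norm]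
  exact (LinearMap.toContinuousLinearMap (Matrix.toEuclideanLin M)).le_opNorm (WithLp.toLp 2 v)

lemma mopnorm_add_le (A B : Matrix (Fin d) (Fin d) ℂ) :
    mopnorm (A + B) ≤ mopnorm A + mopnorm B := by
  simp only [mopnorm, map_add]
  exact norm_add_le _ _

lemma half_le_ernorm_add_smul {k ξ : Fin n → ℝ} {N : ℝ} (hN : 0 ≤ N) (hξ : 1 ≤ ernorm ξ)
    (hk : 2 * ernorm k ≤ N) : N / 2 ≤ ernorm (k + N • ξ) := by
  have := ernorm_sub_ernorm_le (N • ξ) k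
  rw [ernorm_smul, abs_of_nonneg hN] at this
  nlinarith

lemma intCast_add_mul (k ξ : Fin n → ℤ) (N : ℕ) :
    (fun i => ((k i + (N : ℤ) * ξ i : ℤ) : ℝ))
      = (fun i => (k i : ℝ)) + (N : ℝ) • fun i => (ξ i : ℝ) := by
  ext i; simp

lemma add_nsmul_ne_zero {k ξ : Fin n → ℤ} (hξ : ξ ≠ 0) {N : ℕ} (hN : 0 < N)
    (hk : 2 * ernorm (fun i => (k i : ℝ)) ≤ N) : k + (N : ℤ) • ξ ≠ 0 := by
  intro hzero
  have hfar := half_le_ernorm_add_smul (Nat.cast_nonneg N) (one_le_ernorm_intCast hξ) hk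
  have hcast : (fun i => ((k i + (N : ℤ) * ξ i : ℤ) : ℝ)) = 0 := by
    ext i
    simpa using congrArg (fun m : ℤ => (m : ℝ)) (congrFun hzero i)
  rw [← intCast_add_mul, hcast, ernorm_zero] at hfar
  have : (0 : ℝ) < N := Nat.cast_pos.2 hN
  linarith

lemma mopnorm_sub_le_of_homogeneous {p : (Fin n → ℝ) → Matrix (Fin d) (Fin d) ℂ}
    (hhom : ∀ η (s : ℝ), 0 < s → p (s • η) = p η) {ξ : Fin n → ℝ} {L : ℝ}
    (hlip : ∀ η, ernorm (η - ξ) ≤ 1 / 2 → mopnorm (p η - p ξ) ≤ L * ernorm (η - ξ))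
    {k : Fin n → ℝ} {N : ℝ} (hN : 0 < N) (hk : 2 * ernorm k ≤ N) :
    mopnorm (p (k + N • ξ) - p ξ) ≤ L * ernorm k / N := by
  have hscale : k + N • ξ = N • (N⁻¹ • k + ξ) := by
    rw [smul_add, smul_smul, mul_inv_cancel₀ hN.ne', one_smul]
  have hdist : ernorm (N⁻¹ • k + ξ - ξ) = ernorm k / N := by
    rw [add_sub_cancel_right, ernorm_smul, abs_inv, abs_of_pos hN, inv_mul_eq_div]
  rw [hscale, hhom _ _ hN, mul_div_assoc, ← hdist]
  exact hlip _ (by rw [hdist, div_le_iff₀ hN]; linarith)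

lemma mopnorm_symbol_sub_le {p q : (Fin n → ℝ) → Matrix (Fin d) (Fin d) ℂ}
    (hhom : ∀ η (s : ℝ), 0 < s → p (s • η) = p η) {ξ : Fin n → ℝ} {L C : ℝ}
    (hlip : ∀ η, ernorm (η - ξ) ≤ 1 / 2 → mopnorm (p η - p ξ) ≤ L * ernorm (η - ξ))
    (hC : 0 ≤ C) (hq : ∀ η, 1 ≤ ernorm η → mopnorm (q η) ≤ C / ernorm η)
    (hξ : 1 ≤ ernorm ξ) {k : Fin n → ℝ} {N : ℝ} (hN : 2 ≤ N) (hk : 2 * ernorm k ≤ N) :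
    mopnorm (p (k + N • ξ) + q (k + N • ξ) - p ξ) ≤ (L * ernorm k + 2 * C) / N := by
  have hfar := half_le_ernorm_add_smul (by linarith) hξ hk
  have hq' : mopnorm (q (k + N • ξ)) ≤ 2 * C / N :=
    calc mopnorm (q (k + N • ξ)) ≤ C / ernorm (k + N • ξ) := hq _ (by linarith)
      _ ≤ C / (N / 2) := div_le_div_of_nonneg_left hC (by linarith) hfar
      _ = 2 * C / N := by ring
  calc mopnorm (p (k + N • ξ) + q (k + N • ξ) - p ξ)
      = mopnorm ((p (k + N • ξ) - p ξ) + q (k + N • ξ)) := by rw [add_sub_right_comm]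
    _ ≤ L * ernorm k / N + 2 * C / N :=
        (mopnorm_add_le _ _).trans
          (add_le_add (mopnorm_sub_le_of_homogeneous hhom hlip (by linarith) hk) hq')
    _ = (L * ernorm k + 2 * C) / N := by ring

lemma ite_sum_mulVec_sub_mulVec_sum {ι : Type*} (S : Finset ι) (c : ι → Prop) [DecidablePred c]
    (hc : ∀ k ∈ S, ¬ c k) (E e : ι → ℂ) (E₀ : ℂ) (hE : ∀ k ∈ S, E k = E₀ * e k)
    (M : ι → Matrix (Fin d) (Fin d) ℂ) (M₀ : Matrix (Fin d) (Fin d) ℂ) (b : ι → Fin d → ℂ) :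
    (fun j => (∑ k ∈ S, if c k then 0 else E k * (M k *ᵥ b k) j)
        - E₀ * (M₀ *ᵥ fun j' => ∑ k ∈ S, e k * b k j') j)
      = ∑ k ∈ S, E k • ((M k - M₀) *ᵥ b k) := by
  have hb : (fun j' => ∑ k ∈ S, e k * b k j') = ∑ k ∈ S, e k • b k := by
    ext j'; simp [Finset.sum_apply]
  ext j
  simp only [hb, mulVec_sum, mulVec_smul, Finset.sum_apply, Finset.mul_sum,
    ← Finset.sum_sub_distrib]
  refine Finset.sum_congr rfl fun k hk => ?_
  simp only [if_neg (hc k hk), hE k hk, sub_mulVec, Pi.smul_apply, Pi.sub_apply, smul_eq_mul]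
  ring

lemma ecnorm_sum_smul_mulVec_le {ι : Type*} (S : Finset ι) (E : ι → ℂ)
    (hE : ∀ k ∈ S, ‖E k‖ = 1) (M : ι → Matrix (Fin d) (Fin d) ℂ) (b : ι → Fin d → ℂ) :
    ecnorm (∑ k ∈ S, E k • (M k *ᵥ b k)) ≤ ∑ k ∈ S, mopnorm (M k) * ecnorm (b k) := by
  refine (ecnorm_sum_le _ _).trans (Finset.sum_le_sum fun k hk => ?_)
  rw [ecnorm_smul, hE k hk, one_mul]
  exact ecnorm_mulVec_le _ _

lemma norm_exp_I_mul_sum_intCast (m : Fin n → ℤ) (x : Fin n → ℝ) :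
    ‖Complex.exp (Complex.I * ∑ i, (m i : ℂ) * (x i : ℂ))‖ = 1 := by
  have : Complex.I * ∑ i, (m i : ℂ) * (x i : ℂ) = ((∑ i, (m i : ℝ) * x i : ℝ) : ℂ) * Complex.I := by
    push_cast; ring
  rw [this, Complex.norm_exp_ofReal_mul_I]

lemma exp_I_mul_sum_add_nsmul (k ξ : Fin n → ℤ) (N : ℕ) (x : Fin n → ℝ) :
    Complex.exp (Complex.I * ∑ i, ((k i + (N : ℤ) * ξ i : ℤ) : ℂ) * (x i : ℂ))
      = Complex.exp (Complex.I * (N : ℂ) * ∑ i, ((ξ i : ℤ) : ℂ) * (x i : ℂ))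
        * Complex.exp (Complex.I * ∑ i, ((k i : ℤ) : ℂ) * (x i : ℂ)) := by
  rw [← Complex.exp_add, Finset.mul_sum, Finset.mul_sum, Finset.mul_sum, ← Finset.sum_add_distrib]
  push_cast
  congr 1
  exact Finset.sum_congr rfl fun i _ => by ring

/-- Sharpened shortwave asymptotics: for a semiclassical symbol
`a = a₀ + a₁` (`a₀` 0-homogeneous and Lipschitz near `ξ₀`, `‖a₁(x,ξ)‖ ≤ C₁/‖ξ‖`),
the discrete pseudodifferential operator `A` applied to the wavelet
`f_N(x) = b(x) e^{iNξ₀·x}` (with `b` a trigonometric polynomial) satisfies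
`A f_N(x) = a₀(x,ξ₀) b(x) e^{iNξ₀·x} + O(1/N)` uniformly in `x`. -/
theorem stmt_12 {n d : ℕ}
    (ξ₀ : Fin n → ℤ) (hξ₀ : ξ₀ ≠ 0)
    (a₀ a₁ : (Fin n → ℝ) → (Fin n → ℝ) → Matrix (Fin d) (Fin d) ℂ)
    (hhom : ∀ (x ξ : Fin n → ℝ) (s : ℝ), 0 < s → a₀ x (s • ξ) = a₀ x ξ)
    (L : ℝ) (hL : 0 < L)
    (hlip : ∀ (x ξ η : Fin n → ℝ),
      ernorm (ξ - fun i => (ξ₀ i : ℝ)) ≤ 1 / 2 →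
      ernorm (η - fun i => (ξ₀ i : ℝ)) ≤ 1 / 2 →
      mopnorm (a₀ x ξ - a₀ x η) ≤ L * ernorm (ξ - η))
    (C₁ : ℝ) (hC₁ : 0 < C₁)
    (ha₁ : ∀ (x ξ : Fin n → ℝ), 1 ≤ ernorm ξ → mopnorm (a₁ x ξ) ≤ C₁ / ernorm ξ)
    (S : Finset (Fin n → ℤ)) (bhat : (Fin n → ℤ) → Fin d → ℂ) :
    ∃ C > (0:ℝ), ∃ N₀ : ℕ, ∀ N : ℕ, N₀ ≤ N → ∀ x : Fin n → ℝ,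
      ecnorm (fun j =>
        (∑ k ∈ S,
          if (k + (N : ℤ) • ξ₀) = 0 then 0 else
            Complex.exp (Complex.I * ∑ i, ((k i + (N : ℤ) * ξ₀ i : ℤ) : ℂ) * (x i : ℂ)) *
            ((a₀ x (fun i => ((k i + (N : ℤ) * ξ₀ i : ℤ) : ℝ))
              + a₁ x (fun i => ((k i + (N : ℤ) * ξ₀ i : ℤ) : ℝ))).mulVec (bhat k)) j)
        - Complex.exp (Complex.I * (N : ℂ) * ∑ i, ((ξ₀ i : ℤ) : ℂ) * (x i : ℂ)) *
            ((a₀ x fun i => (ξ₀ i : ℝ)).mulVec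
              (fun j' => ∑ k ∈ S,
                Complex.exp (Complex.I * ∑ i, ((k i : ℤ) : ℂ) * (x i : ℂ)) * bhat k j')) j)
      ≤ C / N := by
  set ξr : Fin n → ℝ := fun i => (ξ₀ i : ℝ)
  obtain ⟨N₀, hN₀⟩ := Filter.eventually_atTop.1 <| (Filter.eventually_ge_atTop 2).and <|
    (Filter.eventually_all_finset S).2 fun k _ =>
      tendsto_natCast_atTop_atTop.eventually_ge_atTop (2 * ernorm fun i => (k i : ℝ))
  set A := ∑ k ∈ S, (L * ernorm (fun i => (k i : ℝ)) + 2 * C₁) * ecnorm (bhat k)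
  have hA : 0 ≤ A := Finset.sum_nonneg fun k _ => mul_nonneg
    (add_nonneg (mul_nonneg hL.le (ernorm_nonneg _)) (by linarith)) (ecnorm_nonneg _)
  refine ⟨A + 1, by linarith, N₀, fun N hN x => ?_⟩
  obtain ⟨hN2, hSN⟩ := hN₀ N hN
  have hsym : ∀ k ∈ S, mopnorm ((a₀ x (fun i => ((k i + (N : ℤ) * ξ₀ i : ℤ) : ℝ))
      + a₁ x (fun i => ((k i + (N : ℤ) * ξ₀ i : ℤ) : ℝ))) - a₀ x ξr)
      ≤ (L * ernorm (fun i => (k i : ℝ)) + 2 * C₁) / N := fun k hk => by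
    rw [intCast_add_mul]
    exact mopnorm_symbol_sub_le (hhom x) (fun η hη => hlip x η ξr hη (by simp [ernorm_zero]))
      hC₁.le (ha₁ x) (one_le_ernorm_intCast hξ₀) (by exact_mod_cast hN2) (hSN k hk)
  have hne : ∀ k ∈ S, k + (N : ℤ) • ξ₀ ≠ 0 := fun k hk =>
    add_nsmul_ne_zero hξ₀ (by omega) (hSN k hk)
  rw [ite_sum_mulVec_sub_mulVec_sum S _ hne _ _ _ (fun k _ => exp_I_mul_sum_add_nsmul k ξ₀ N x)]
  calc _ ≤ _ := ecnorm_sum_smul_mulVec_le S _ (fun k _ => norm_exp_I_mul_sum_intCast _ x) _ _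
    _ ≤ ∑ k ∈ S, (L * ernorm (fun i => (k i : ℝ)) + 2 * C₁) / N * ecnorm (bhat k) :=
        Finset.sum_le_sum fun k hk => mul_le_mul_of_nonneg_right (hsym k hk) (ecnorm_nonneg _)
    _ = A / N := by rw [Finset.sum_div]; exact Finset.sum_congr rfl fun k _ => by ring
    _ ≤ (A + 1) / N := by gcongr; linarith
end

section
/- Let Θ be a compact metric space, φ a continuous flow on Θ, B a jointly continuous exponentially bounded cocycle over φ of invertible operators on a finite-dimensional complex normed space E, with exponents μ⁺ = μ⁺(B) and μ⁻ = μ⁻(B) (assumed to exist as limits), and let X be a positive scalar cocycle over φ. Let μ, λ ∈ ℝ and θ₀ ∈ Θ be such that (1/t) log X_t(θ₀) → λ as t → ∞. Suppose the rescaled product cocycle Φ_t(θ) = e^{−μt} X_t(θ) B_t(θ) is exponentially dichotomic with projection-valued map P satisfying P(θ₀) ≠ 0 and P(θ₀) ≠ id. Then λ + μ⁻ ≤ μ ≤ λ + μ⁺. -/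
open Filter

/-- If the rescaled product cocycle `e^{-μt} X_t B_t` admits an
exponential dichotomy whose projector is nontrivial at a point `θ₀` where the scalar
cocycle `X` has exact exponent `λ`, then `λ + μ⁻ ≤ μ ≤ λ + μ⁺`, where `μ±` are the
extreme exponents of `B`. -/
theorem stmt_14
    {Θ : Type*} [MetricSpace Θ] [CompactSpace Θ] [Nonempty Θ]
    {E : Type*} [NormedAddCommGroup E] [NormedSpace ℂ E] [FiniteDimensional ℂ E]
    (φ : ℝ → Θ → Θ)
    (hφ0 : ∀ θ, φ 0 θ = θ)
    (hφadd : ∀ t s θ, φ (t + s) θ = φ t (φ s θ))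
    (hφcont : Continuous fun p : ℝ × Θ => φ p.1 p.2)
    (B : ℝ → Θ → E ≃L[ℂ] E)
    (hB0 : ∀ θ, (B 0 θ : E →L[ℂ] E) = ContinuousLinearMap.id ℂ E)
    (hBcoc : ∀ t s θ, (B (t + s) θ : E →L[ℂ] E)
      = ((B t (φ s θ) : E →L[ℂ] E)).comp (B s θ : E →L[ℂ] E))
    (hBcont : Continuous fun p : ℝ × Θ => (B p.1 p.2 : E →L[ℂ] E))
    (K a : ℝ) (hK : 0 < K) (ha : 0 < a)
    (hBbdd : ∀ t θ, ‖(B t θ : E →L[ℂ] E)‖ ≤ K * Real.exp (a * |t|))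
    (X : ℝ → Θ → ℝ) (hXpos : ∀ t θ, 0 < X t θ)
    (hXcont : Continuous fun p : ℝ × Θ => X p.1 p.2)
    (hX0 : ∀ θ, X 0 θ = 1)
    (hXcoc : ∀ t s θ, X (t + s) θ = X t (φ s θ) * X s θ)
    (μp μm : ℝ)
    (hμp : Tendsto (fun t : ℝ => Real.log (⨆ θ, ‖(B t θ : E →L[ℂ] E)‖) / t)
      atTop (nhds μp))
    (hμm : Tendsto (fun t : ℝ => -(Real.log (⨆ θ, ‖((B t θ).symm : E →L[ℂ] E)‖) / t))
      atTop (nhds μm))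
    (mu lam : ℝ) (θ₀ : Θ)
    (hlam : Tendsto (fun t : ℝ => Real.log (X t θ₀) / t) atTop (nhds lam))
    (P : Θ → E →L[ℂ] E) (M ε : ℝ) (hM : 0 < M) (hε : 0 < ε)
    (hPcont : Continuous P)
    (hPproj : ∀ θ, (P θ).comp (P θ) = P θ)
    (hPcomm : ∀ t θ,
      (P (φ t θ)).comp (((Real.exp (-(mu * t)) * X t θ : ℝ) : ℂ) • (B t θ : E →L[ℂ] E))
        = ((((Real.exp (-(mu * t)) * X t θ : ℝ) : ℂ) • (B t θ : E →L[ℂ] E)).comp (P θ)))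
    (hPs : ∀ t θ, 0 < t →
      ‖(((Real.exp (-(mu * t)) * X t θ : ℝ) : ℂ) • (B t θ : E →L[ℂ] E)).comp (P θ)‖
        ≤ M * Real.exp (-(ε * t)))
    (hPu : ∀ t θ, t < 0 →
      ‖(((Real.exp (-(mu * t)) * X t θ : ℝ) : ℂ) • (B t θ : E →L[ℂ] E)).comp
          (ContinuousLinearMap.id ℂ E - P θ)‖ ≤ M * Real.exp (ε * t))
    (hP0 : P θ₀ ≠ 0) (hPid : P θ₀ ≠ ContinuousLinearMap.id ℂ E) :
    lam + μm ≤ mu ∧ mu ≤ lam + μp := by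
  classical
  -- nontrivial vectors
  obtain ⟨v₁, hv₁⟩ : ∃ v, P θ₀ v ≠ 0 := by
    by_contra h
    push_neg at h
    exact hP0 (ContinuousLinearMap.ext fun v => by simpa using h v)
  obtain ⟨v₂, hv₂⟩ : ∃ v, P θ₀ v ≠ v := by
    by_contra h
    push_neg at h
    exact hPid (ContinuousLinearMap.ext fun v => by simpa using h v)
  set w₁ := P θ₀ v₁ with hw₁def
  have hw₁ : P θ₀ w₁ = w₁ := by
    have h := congrArg (fun f => f v₁) (hPproj θ₀)
    simpa [hw₁def] using h
  have hw₁ne : w₁ ≠ 0 := hv₁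
  set w₂ := v₂ - P θ₀ v₂ with hw₂def
  have hw₂ne : w₂ ≠ 0 := sub_ne_zero.mpr (Ne.symm hv₂)
  have hw₂P : P θ₀ w₂ = 0 := by
    have h := congrArg (fun f => f v₂) (hPproj θ₀)
    simp only [ContinuousLinearMap.comp_apply] at h
    simp [hw₂def, map_sub, h]
  -- inverse identity
  have hinv : ∀ (t : ℝ) (θ : Θ),
      (((B t θ).symm : E →L[ℂ] E)) = ((B (-t) (φ t θ) : E →L[ℂ] E)) := by
    intro t θ
    have h := hBcoc (-t) t θ
    rw [neg_add_cancel, hB0] at h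
    ext x
    have h2 := congrArg (fun f : E →L[ℂ] E => f ((B t θ).symm x)) h
    simpa using h2
  -- boundedness of the sups
  have hbddS : ∀ t : ℝ, BddAbove (Set.range fun θ => ‖(B t θ : E →L[ℂ] E)‖) := by
    intro t
    refine ⟨K * Real.exp (a * |t|), ?_⟩
    rintro _ ⟨θ, rfl⟩
    exact hBbdd t θ
  have hbddT : ∀ t : ℝ, BddAbove (Set.range fun θ => ‖((B t θ).symm : E →L[ℂ] E)‖) := by
    intro t
    refine ⟨K * Real.exp (a * |t|), ?_⟩
    rintro _ ⟨θ, rfl⟩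
    show ‖((B t θ).symm : E →L[ℂ] E)‖ ≤ K * Real.exp (a * |t|)
    rw [hinv t θ]
    calc ‖(B (-t) (φ t θ) : E →L[ℂ] E)‖ ≤ K * Real.exp (a * |(-t)|) := hBbdd (-t) (φ t θ)
      _ = K * Real.exp (a * |t|) := by rw [abs_neg]
  have hTnn : ∀ t : ℝ, 0 ≤ ⨆ θ, ‖((B t θ).symm : E →L[ℂ] E)‖ := fun t =>
    le_trans (norm_nonneg _) (le_ciSup (hbddT t) θ₀)
  have hSnn : ∀ t : ℝ, 0 ≤ ⨆ θ, ‖(B t θ : E →L[ℂ] E)‖ := fun t =>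
    le_trans (norm_nonneg _) (le_ciSup (hbddS t) θ₀)
  -- key inequality A
  have keyA : ∀ t : ℝ, 0 < t →
      Real.exp (-(mu * t)) * X t θ₀
        ≤ (M * Real.exp (-(ε * t))) * ⨆ θ, ‖((B t θ).symm : E →L[ℂ] E)‖ := by
    intro t ht
    have hcpos : 0 < Real.exp (-(mu * t)) * X t θ₀ :=
      mul_pos (Real.exp_pos _) (hXpos t θ₀)
    have h1 : ‖(((Real.exp (-(mu * t)) * X t θ₀ : ℝ) : ℂ) • (B t θ₀ : E →L[ℂ] E)) w₁‖
        ≤ M * Real.exp (-(ε * t)) * ‖w₁‖ := by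
      have h0 := ContinuousLinearMap.le_of_opNorm_le _ (hPs t θ₀ ht) w₁
      simpa [ContinuousLinearMap.comp_apply, hw₁] using h0
    have h2 : ‖(((Real.exp (-(mu * t)) * X t θ₀ : ℝ) : ℂ) • (B t θ₀ : E →L[ℂ] E)) w₁‖
        = (Real.exp (-(mu * t)) * X t θ₀) * ‖(B t θ₀ : E →L[ℂ] E) w₁‖ := by
      rw [ContinuousLinearMap.smul_apply, norm_smul, Complex.norm_real,
        Real.norm_eq_abs, abs_of_pos hcpos]
    have h4 : ‖w₁‖ ≤ ‖((B t θ₀).symm : E →L[ℂ] E)‖ * ‖(B t θ₀ : E →L[ℂ] E) w₁‖ := by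
      have h5 := ContinuousLinearMap.le_opNorm ((B t θ₀).symm : E →L[ℂ] E)
        ((B t θ₀ : E →L[ℂ] E) w₁)
      simpa using h5
    have h3 : ‖w₁‖ ≤ (⨆ θ, ‖((B t θ).symm : E →L[ℂ] E)‖) * ‖(B t θ₀ : E →L[ℂ] E) w₁‖ := by
      refine h4.trans ?_
      gcongr
      exact le_ciSup (hbddT t) θ₀
    have hn : 0 < ‖w₁‖ := norm_pos_iff.mpr hw₁ne
    have h5 : (Real.exp (-(mu * t)) * X t θ₀) * ‖w₁‖
        ≤ ((M * Real.exp (-(ε * t))) * ⨆ θ, ‖((B t θ).symm : E →L[ℂ] E)‖) * ‖w₁‖ := by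
      have s2 : (Real.exp (-(mu * t)) * X t θ₀) * ‖(B t θ₀ : E →L[ℂ] E) w₁‖
          ≤ M * Real.exp (-(ε * t)) * ‖w₁‖ := by rw [← h2]; exact h1
      calc (Real.exp (-(mu * t)) * X t θ₀) * ‖w₁‖
          ≤ (Real.exp (-(mu * t)) * X t θ₀)
            * ((⨆ θ, ‖((B t θ).symm : E →L[ℂ] E)‖) * ‖(B t θ₀ : E →L[ℂ] E) w₁‖) :=
            mul_le_mul_of_nonneg_left h3 hcpos.le
        _ = (⨆ θ, ‖((B t θ).symm : E →L[ℂ] E)‖)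
            * ((Real.exp (-(mu * t)) * X t θ₀) * ‖(B t θ₀ : E →L[ℂ] E) w₁‖) := by ring
        _ ≤ (⨆ θ, ‖((B t θ).symm : E →L[ℂ] E)‖) * (M * Real.exp (-(ε * t)) * ‖w₁‖) :=
            mul_le_mul_of_nonneg_left s2 (hTnn t)
        _ = ((M * Real.exp (-(ε * t))) * ⨆ θ, ‖((B t θ).symm : E →L[ℂ] E)‖) * ‖w₁‖ := by ring
    exact le_of_mul_le_mul_right h5 hn
  -- key inequality B
  have keyB : ∀ s : ℝ, 0 < s →
      1 ≤ (M * Real.exp (-(ε * s))) * (Real.exp (-(mu * s)) * X s θ₀)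
        * ⨆ θ, ‖(B s θ : E →L[ℂ] E)‖ := by
    intro s hs
    set θ' := φ s θ₀ with hθ'
    have hc₂pos : 0 < Real.exp (-(mu * s)) * X s θ₀ :=
      mul_pos (Real.exp_pos _) (hXpos s θ₀)
    have hc₂C : ((Real.exp (-(mu * s)) * X s θ₀ : ℝ) : ℂ) ≠ 0 := by
      exact_mod_cast ne_of_gt hc₂pos
    set u := (((Real.exp (-(mu * s)) * X s θ₀ : ℝ) : ℂ) • (B s θ₀ : E →L[ℂ] E)) w₂ with hu
    have hPu' := hPu (-s) θ' (by linarith)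
    have hPB : P θ' ((B s θ₀ : E →L[ℂ] E) w₂) = 0 := by
      have h := congrArg (fun f => f w₂) (hPcomm s θ₀)
      simp only [ContinuousLinearMap.comp_apply, ContinuousLinearMap.smul_apply, hw₂P,
        map_zero, smul_zero, map_smul] at h
      exact (smul_eq_zero.mp h).resolve_left hc₂C
    have hBB : (B (-s) θ' : E →L[ℂ] E) ((B s θ₀ : E →L[ℂ] E) w₂) = w₂ := by
      have h := hBcoc (-s) s θ₀
      rw [neg_add_cancel, hB0] at h
      have h2 := congrArg (fun f : E →L[ℂ] E => f w₂) h
      simpa [hθ'] using h2.symm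
    have hXX : X (-s) θ' * X s θ₀ = 1 := by
      have h := hXcoc (-s) s θ₀
      rw [neg_add_cancel, hX0] at h
      exact h.symm
    have happ : ((((Real.exp (-(mu * (-s))) * X (-s) θ' : ℝ) : ℂ) • (B (-s) θ' : E →L[ℂ] E)).comp
        (ContinuousLinearMap.id ℂ E - P θ')) u = w₂ := by
      have hone : Real.exp (-(mu * s)) * X s θ₀ * (Real.exp (-(mu * -s)) * X (-s) θ') = 1 := by
        calc Real.exp (-(mu * s)) * X s θ₀ * (Real.exp (-(mu * -s)) * X (-s) θ')
            = (Real.exp (-(mu * -s)) * Real.exp (-(mu * s))) * (X (-s) θ' * X s θ₀) := by ring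
          _ = 1 := by
              rw [hXX, mul_one, ← Real.exp_add]
              norm_num
      simp only [hu, ContinuousLinearMap.comp_apply, ContinuousLinearMap.sub_apply,
        ContinuousLinearMap.id_apply, ContinuousLinearMap.smul_apply, map_smul, hPB,
        smul_zero, sub_zero, hBB, smul_smul, ← Complex.ofReal_mul, hone]
      simp
    have h1 : ‖w₂‖ ≤ M * Real.exp (ε * (-s)) * ‖u‖ := by
      have h0 := ContinuousLinearMap.le_of_opNorm_le _ hPu' u
      rwa [happ] at h0
    have hnu : ‖u‖ ≤ (Real.exp (-(mu * s)) * X s θ₀)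
        * ((⨆ θ, ‖(B s θ : E →L[ℂ] E)‖) * ‖w₂‖) := by
      have he : ‖u‖ = (Real.exp (-(mu * s)) * X s θ₀) * ‖(B s θ₀ : E →L[ℂ] E) w₂‖ := by
        rw [hu, ContinuousLinearMap.smul_apply, norm_smul, Complex.norm_real,
          Real.norm_eq_abs, abs_of_pos hc₂pos]
      rw [he]
      gcongr
      exact (ContinuousLinearMap.le_opNorm _ _).trans
        (by gcongr; exact le_ciSup (hbddS s) θ₀)
    have hn : 0 < ‖w₂‖ := norm_pos_iff.mpr hw₂ne
    have h2 : 1 * ‖w₂‖ ≤ ((M * Real.exp (-(ε * s))) * (Real.exp (-(mu * s)) * X s θ₀)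
        * ⨆ θ, ‖(B s θ : E →L[ℂ] E)‖) * ‖w₂‖ := by
      calc 1 * ‖w₂‖ = ‖w₂‖ := one_mul _
        _ ≤ M * Real.exp (ε * (-s)) * ‖u‖ := h1
        _ ≤ M * Real.exp (ε * (-s)) * ((Real.exp (-(mu * s)) * X s θ₀)
            * ((⨆ θ, ‖(B s θ : E →L[ℂ] E)‖) * ‖w₂‖)) :=
            mul_le_mul_of_nonneg_left hnu (mul_nonneg hM.le (Real.exp_pos _).le)
        _ = ((M * Real.exp (-(ε * s))) * (Real.exp (-(mu * s)) * X s θ₀)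
            * ⨆ θ, ‖(B s θ : E →L[ℂ] E)‖) * ‖w₂‖ := by
            rw [show ε * -s = -(ε * s) by ring]; ring
    exact le_of_mul_le_mul_right h2 hn
  -- logarithmic form A
  have logA : ∀ t : ℝ, 0 < t →
      -mu + Real.log (X t θ₀) / t
        ≤ Real.log M / t + -ε + Real.log (⨆ θ, ‖((B t θ).symm : E →L[ℂ] E)‖) / t := by
    intro t ht
    have ht' : t ≠ 0 := ne_of_gt ht
    have hcpos : 0 < Real.exp (-(mu * t)) * X t θ₀ :=
      mul_pos (Real.exp_pos _) (hXpos t θ₀)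
    have hMe : 0 < M * Real.exp (-(ε * t)) := mul_pos hM (Real.exp_pos _)
    have hTpos : 0 < ⨆ θ, ‖((B t θ).symm : E →L[ℂ] E)‖ := by
      by_contra h
      push_neg at h
      have hA := keyA t ht
      nlinarith
    have h := Real.log_le_log hcpos (keyA t ht)
    rw [Real.log_mul (Real.exp_ne_zero _) (ne_of_gt (hXpos t θ₀)),
      Real.log_mul (ne_of_gt hMe) (ne_of_gt hTpos),
      Real.log_mul (ne_of_gt hM) (Real.exp_ne_zero _),
      Real.log_exp, Real.log_exp] at h
    have h2 : (-(mu * t) + Real.log (X t θ₀)) / t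
        ≤ (Real.log M + -(ε * t) + Real.log (⨆ θ, ‖((B t θ).symm : E →L[ℂ] E)‖)) / t := by
      apply div_le_div_of_nonneg_right ?_ ht.le
      linarith
    have e1 : -(mu * t) / t = -mu := by
      rw [neg_div, mul_div_assoc, div_self ht', mul_one]
    have e2 : -(ε * t) / t = -ε := by
      rw [neg_div, mul_div_assoc, div_self ht', mul_one]
    rw [add_div, add_div, add_div, e1, e2] at h2
    exact h2
  -- logarithmic form B
  have logB : ∀ s : ℝ, 0 < s →
      (0 : ℝ) ≤ Real.log M / s + -ε + -mu + Real.log (X s θ₀) / s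
        + Real.log (⨆ θ, ‖(B s θ : E →L[ℂ] E)‖) / s := by
    intro s hs
    have hs' : s ≠ 0 := ne_of_gt hs
    have hMe : 0 < M * Real.exp (-(ε * s)) := mul_pos hM (Real.exp_pos _)
    have hc₂pos : 0 < Real.exp (-(mu * s)) * X s θ₀ :=
      mul_pos (Real.exp_pos _) (hXpos s θ₀)
    have hSpos : 0 < ⨆ θ, ‖(B s θ : E →L[ℂ] E)‖ := by
      by_contra h
      push_neg at h
      have hB' := keyB s hs
      nlinarith [mul_pos hMe hc₂pos]
    have h := Real.log_le_log one_pos (keyB s hs)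
    rw [Real.log_one,
      Real.log_mul (ne_of_gt (mul_pos hMe hc₂pos)) (ne_of_gt hSpos),
      Real.log_mul (ne_of_gt hMe) (ne_of_gt hc₂pos),
      Real.log_mul (ne_of_gt hM) (Real.exp_ne_zero _),
      Real.log_mul (Real.exp_ne_zero _) (ne_of_gt (hXpos s θ₀)),
      Real.log_exp, Real.log_exp] at h
    have h2 : (0 : ℝ) / s
        ≤ (Real.log M + -(ε * s) + (-(mu * s) + Real.log (X s θ₀))
          + Real.log (⨆ θ, ‖(B s θ : E →L[ℂ] E)‖)) / s := by
      apply div_le_div_of_nonneg_right ?_ hs.le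
      linarith
    have e1 : -(mu * s) / s = -mu := by
      rw [neg_div, mul_div_assoc, div_self hs', mul_one]
    have e2 : -(ε * s) / s = -ε := by
      rw [neg_div, mul_div_assoc, div_self hs', mul_one]
    rw [zero_div, add_div, add_div, add_div, add_div, e1, e2] at h2
    linarith
  -- limits
  have hMlim : Tendsto (fun t : ℝ => Real.log M / t) atTop (nhds 0) :=
    Tendsto.div_atTop tendsto_const_nhds tendsto_id
  have hTlim : Tendsto (fun t : ℝ => Real.log (⨆ θ, ‖((B t θ).symm : E →L[ℂ] E)‖) / t)
      atTop (nhds (-μm)) := by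
    have h := hμm.neg
    simpa using h
  have hA : -mu + lam ≤ 0 + -ε + -μm := by
    refine le_of_tendsto_of_tendsto (tendsto_const_nhds.add hlam)
      (((hMlim.add tendsto_const_nhds).add hTlim)) ?_
    filter_upwards [eventually_gt_atTop (0 : ℝ)] with t ht
    exact logA t ht
  have hB' : (0 : ℝ) ≤ 0 + -ε + -mu + lam + μp := by
    refine le_of_tendsto_of_tendsto (tendsto_const_nhds)
      ((((hMlim.add tendsto_const_nhds).add tendsto_const_nhds).add hlam).add hμp) ?_
    filter_upwards [eventually_gt_atTop (0 : ℝ)] with s hs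
    exact logB s hs
  constructor
  · linarith
  · linarith
end

section
/- Let H be a complex Hilbert space and T : H → H a bounded invertible linear operator with bounded inverse. Suppose there exist bounded linear projections P_s, P_c, P_u on H with P_s + P_c + P_u = id and P_i P_j = 0 for i ≠ j, whose ranges X_s, X_c, X_u are closed, invariant under both T and T^{−1}, with X_c finite-dimensional, and constants M ≥ 1, ε > 0 such that ‖Tⁿ x‖ ≤ M e^{−εn} ‖x‖ for all x ∈ X_s and n ≥ 0, and ‖Tⁿ x‖ ≥ M^{−1} e^{εn} ‖x‖ for all x ∈ X_u and n ≥ 0. Then there do NOT exist constants c, C > 0 such that for every n ∈ ℕ there is a sequence (g_{n,k})_{k∈ℕ} in H with ‖g_{n,k}‖ ≤ 1, g_{n,k} → 0 weakly as k → ∞, ‖Tⁿ g_{n,k}‖ > c and ‖T^{2n} g_{n,k}‖ < C for all k. -/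
/-!
Write `x = xs + xc + xu` along the splitting. A weakly null sequence is mapped by the
finite-rank projection `Pc` to a norm-null sequence, so for `k` large the center part is
negligible. Then `‖Tⁿ x‖ > c` forces the unstable part of `Tⁿ x` to have norm about `c`,
and iterating `n` more times multiplies it by at least `e^{εn}/M`, while the stable part
stays bounded by `M ‖Ps‖`. This is incompatible with `‖T²ⁿ x‖ < C` once `n` is large.
-/

open Filter Topology Set Real

section Weak

variable {𝕜 E F ι : Type*} [RCLike 𝕜] [NormedAddCommGroup E] [InnerProductSpace 𝕜 E]
  [NormedAddCommGroup F] [InnerProductSpace 𝕜 F] {l : Filter ι}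

theorem Submodule.tendsto_zero_of_forall_inner_tendsto_zero (U : Submodule 𝕜 E)
    [FiniteDimensional 𝕜 U] {v : ι → E} (hvU : ∀ k, v k ∈ U)
    (hv : ∀ h, Tendsto (fun k => inner 𝕜 h (v k)) l (𝓝 0)) : Tendsto v l (𝓝 0) := by
  let b := stdOrthonormalBasis 𝕜 U
  have hexp : ∀ k, ∑ i, inner 𝕜 (b i : E) (v k) • (b i : E) = v k := fun k => by
    have h := congr(($(b.orthogonalProjectionOnto_apply_eq_sum (v k)) : E))
    rw [← U.starProjection_apply, U.starProjection_eq_self_iff.mpr (hvU k)] at h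
    simpa using h.symm
  simpa [hexp] using tendsto_finsetSum Finset.univ fun i _ => (hv (b i)).smul_const (b i : E)

theorem ContinuousLinearMap.tendsto_zero_of_forall_inner_tendsto_zero [CompleteSpace E]
    [CompleteSpace F] (P : E →L[𝕜] F) [FiniteDimensional 𝕜 (LinearMap.range (P : E →ₗ[𝕜] F))]
    {g : ι → E} (hg : ∀ h, Tendsto (fun k => inner 𝕜 (g k) h) l (𝓝 0)) :
    Tendsto (fun k => P (g k)) l (𝓝 0) := by
  refine (LinearMap.range (P : E →ₗ[𝕜] F)).tendsto_zero_of_forall_inner_tendsto_zero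
    (fun k => LinearMap.mem_range_self _ _) fun h => ?_
  simpa [← P.adjoint_inner_left] using (hg (P.adjoint h)).star

end Weak

section Hyperbolic

variable {𝕜 E : Type*} [NormedField 𝕜] [SeminormedAddCommGroup E] [NormedSpace 𝕜 E]

theorem hyperbolic_doubling_estimate {S : E →L[𝕜] E} {W V : Set E} {M ε : ℝ}
    (hM : 0 < M) (hε : 0 ≤ ε)
    (hstab : ∀ x ∈ W, ∀ n : ℕ, ‖(S ^ n) x‖ ≤ M * exp (-(ε * n)) * ‖x‖)
    (hV : MapsTo S V V)
    (hunst : ∀ x ∈ V, ∀ n : ℕ, M⁻¹ * exp (ε * n) * ‖x‖ ≤ ‖(S ^ n) x‖)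
    {xs xc xu : E} (hs : xs ∈ W) (hu : xu ∈ V) (n : ℕ) :
    M⁻¹ * exp (ε * n) * (‖(S ^ n) (xs + xc + xu)‖ - ‖(S ^ n) xc‖)
      ≤ ‖(S ^ (2 * n)) (xs + xc + xu)‖ + ‖(S ^ (2 * n)) xc‖ + (M + 1) * ‖xs‖ := by
  set e := exp (ε * n)
  have he : 0 < e := exp_pos _
  have lower :
      M⁻¹ * e * (‖(S ^ n) (xs + xc + xu)‖ - ‖(S ^ n) xc‖) - ‖xs‖ ≤ ‖(S ^ (2 * n)) xu‖ := by
    have hSnu : (S ^ n) xu ∈ V := by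
      rw [FunLike.coe_pow_eq_iterate]
      exact hV.iterate n hu
    have hsn : ‖(S ^ n) xs‖ ≤ M * e⁻¹ * ‖xs‖ := by simpa only [exp_neg] using hstab xs hs n
    have htri : ‖(S ^ n) (xs + xc + xu)‖ - ‖(S ^ n) xc‖ ≤ M * e⁻¹ * ‖xs‖ + ‖(S ^ n) xu‖ := by
      rw [map_add, map_add]
      linarith [norm_add₃_le (a := (S ^ n) xs) (b := (S ^ n) xc) (c := (S ^ n) xu)]
    calc M⁻¹ * e * (‖(S ^ n) (xs + xc + xu)‖ - ‖(S ^ n) xc‖) - ‖xs‖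
        ≤ M⁻¹ * e * (M * e⁻¹ * ‖xs‖ + ‖(S ^ n) xu‖) - ‖xs‖ := by gcongr
      _ = M⁻¹ * e * ‖(S ^ n) xu‖ := by field_simp; ring
      _ ≤ ‖(S ^ n) ((S ^ n) xu)‖ := hunst _ hSnu n
      _ = ‖(S ^ (2 * n)) xu‖ := by rw [two_mul, pow_add, mul_apply_eq_comp]
  have upper : ‖(S ^ (2 * n)) xu‖ ≤
      ‖(S ^ (2 * n)) (xs + xc + xu)‖ + ‖(S ^ (2 * n)) xc‖ + M * ‖xs‖ := by
    have hs2 : ‖(S ^ (2 * n)) xs‖ ≤ M * ‖xs‖ := by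
      refine (hstab xs hs (2 * n)).trans ?_
      gcongr
      exact mul_le_of_le_one_right hM.le (exp_le_one_iff.mpr (neg_nonpos.mpr (by positivity)))
    have hsplit : (S ^ (2 * n)) xu =
        (S ^ (2 * n)) (xs + xc + xu) - (S ^ (2 * n)) xs - (S ^ (2 * n)) xc := by
      simp only [map_add]; abel
    rw [hsplit]
    linarith [norm_sub_le ((S ^ (2 * n)) (xs + xc + xu) - (S ^ (2 * n)) xs) ((S ^ (2 * n)) xc),
      norm_sub_le ((S ^ (2 * n)) (xs + xc + xu)) ((S ^ (2 * n)) xs)]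
  linarith

end Hyperbolic

theorem stmt_15_general {H : Type*} [NormedAddCommGroup H] [InnerProductSpace ℂ H]
    [CompleteSpace H]
    (T : H ≃L[ℂ] H)
    (Ps Pc Pu : H →L[ℂ] H)
    (hsum : Ps + Pc + Pu = ContinuousLinearMap.id ℂ H)
    (huT : Set.MapsTo T (Set.range Pu) (Set.range Pu))
    (hfin : FiniteDimensional ℂ (LinearMap.range (Pc : H →ₗ[ℂ] H)))
    (M ε : ℝ) (hM : 1 ≤ M) (hε : 0 < ε)
    (hstab : ∀ x ∈ Set.range Ps, ∀ n : ℕ,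
      ‖((T : H →L[ℂ] H) ^ n) x‖ ≤ M * Real.exp (-(ε * n)) * ‖x‖)
    (hunst : ∀ x ∈ Set.range Pu, ∀ n : ℕ,
      M⁻¹ * Real.exp (ε * n) * ‖x‖ ≤ ‖((T : H →L[ℂ] H) ^ n) x‖) :
    ¬ ∃ c C : ℝ, 0 < c ∧ 0 < C ∧ ∀ n : ℕ, ∃ g : ℕ → H,
        (∀ k, ‖g k‖ ≤ 1) ∧
        (∀ h : H, Filter.Tendsto (fun k => (inner ℂ (g k) h : ℂ)) Filter.atTop (nhds 0)) ∧
        (∀ k, c < ‖((T : H →L[ℂ] H) ^ n) (g k)‖ ∧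
          ‖((T : H →L[ℂ] H) ^ (2 * n)) (g k)‖ < C) := by
  rintro ⟨c, C, hc, -, hseq⟩
  set S : H →L[ℂ] H := (T : H →L[ℂ] H)
  have hM0 : 0 < M := by linarith
  obtain ⟨n, hn⟩ : ∃ n : ℕ, C + c / 2 + (M + 1) * ‖Ps‖ < M⁻¹ * exp (ε * n) * (c / 2) :=
    (((tendsto_exp_atTop.comp (tendsto_natCast_atTop_atTop.const_mul_atTop hε)).const_mul_atTop
      (inv_pos.mpr hM0)).atTop_mul_const (half_pos hc)).eventually_gt_atTop _ |>.exists
  obtain ⟨g, hg_le, hg_weak, hg_pow⟩ := hseq n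
  have hcenter (m : ℕ) : Tendsto (fun k => ‖(S ^ m) (Pc (g k))‖) atTop (𝓝 0) := by
    simpa using (((S ^ m).continuous.tendsto 0).comp
      (Pc.tendsto_zero_of_forall_inner_tendsto_zero hg_weak)).norm
  obtain ⟨k, hk_n, hk_2n⟩ := (((hcenter n).eventually_lt_const (half_pos hc)).and
    ((hcenter (2 * n)).eventually_lt_const (half_pos hc))).exists
  have hsplit : Ps (g k) + Pc (g k) + Pu (g k) = g k := by
    simpa using congr($hsum (g k))
  have key := hyperbolic_doubling_estimate (xc := Pc (g k)) hM0 hε.le hstab huT hunst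
    ⟨g k, rfl⟩ ⟨g k, rfl⟩ n
  rw [hsplit] at key
  have hPs : ‖Ps (g k)‖ ≤ ‖Ps‖ := by simpa using Ps.le_opNorm_of_le (hg_le k)
  refine lt_asymm hn ?_
  calc M⁻¹ * exp (ε * n) * (c / 2)
      < M⁻¹ * exp (ε * n) * (‖(S ^ n) (g k)‖ - ‖(S ^ n) (Pc (g k))‖) := by
        gcongr; linarith [(hg_pow k).1]
    _ ≤ ‖(S ^ (2 * n)) (g k)‖ + ‖(S ^ (2 * n)) (Pc (g k))‖ + (M + 1) * ‖Ps (g k)‖ := key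
    _ < C + c / 2 + (M + 1) * ‖Ps‖ :=
      add_lt_add_of_lt_of_le (add_lt_add (hg_pow k).2 hk_2n) (by gcongr)

/-- If a bounded invertible operator `T` on a complex Hilbert space
admits a hyperbolic splitting `H = X_s ⊕ X_c ⊕ X_u` with finite-dimensional center,
then there are no constants `c, C > 0` such that for every `n` there is a weakly-null
sequence of unit-ball vectors `g_{n,k}` with `‖Tⁿ g_{n,k}‖ > c` and
`‖T^{2n} g_{n,k}‖ < C`. -/
theorem stmt_15 {H : Type*} [NormedAddCommGroup H] [InnerProductSpace ℂ H]
    [CompleteSpace H]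
    (T : H ≃L[ℂ] H)
    (Ps Pc Pu : H →L[ℂ] H)
    (hsum : Ps + Pc + Pu = ContinuousLinearMap.id ℂ H)
    (hsc : Ps.comp Pc = 0) (hcs : Pc.comp Ps = 0)
    (hsu : Ps.comp Pu = 0) (hus : Pu.comp Ps = 0)
    (hcu : Pc.comp Pu = 0) (huc : Pu.comp Pc = 0)
    (hPs : Ps.comp Ps = Ps) (hPc : Pc.comp Pc = Pc) (hPu : Pu.comp Pu = Pu)
    (hsclosed : IsClosed (Set.range Ps)) (hcclosed : IsClosed (Set.range Pc))
    (huclosed : IsClosed (Set.range Pu))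
    (hsT : Set.MapsTo T (Set.range Ps) (Set.range Ps))
    (hsTinv : Set.MapsTo T.symm (Set.range Ps) (Set.range Ps))
    (hcT : Set.MapsTo T (Set.range Pc) (Set.range Pc))
    (hcTinv : Set.MapsTo T.symm (Set.range Pc) (Set.range Pc))
    (huT : Set.MapsTo T (Set.range Pu) (Set.range Pu))
    (huTinv : Set.MapsTo T.symm (Set.range Pu) (Set.range Pu))
    (hfin : FiniteDimensional ℂ (LinearMap.range (Pc : H →ₗ[ℂ] H)))
    (M ε : ℝ) (hM : 1 ≤ M) (hε : 0 < ε)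
    (hstab : ∀ x ∈ Set.range Ps, ∀ n : ℕ,
      ‖((T : H →L[ℂ] H) ^ n) x‖ ≤ M * Real.exp (-(ε * n)) * ‖x‖)
    (hunst : ∀ x ∈ Set.range Pu, ∀ n : ℕ,
      M⁻¹ * Real.exp (ε * n) * ‖x‖ ≤ ‖((T : H →L[ℂ] H) ^ n) x‖) :
    ¬ ∃ c C : ℝ, 0 < c ∧ 0 < C ∧ ∀ n : ℕ, ∃ g : ℕ → H,
        (∀ k, ‖g k‖ ≤ 1) ∧
        (∀ h : H, Filter.Tendsto (fun k => (inner ℂ (g k) h : ℂ)) Filter.atTop (nhds 0)) ∧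
        (∀ k, c < ‖((T : H →L[ℂ] H) ^ n) (g k)‖ ∧
          ‖((T : H →L[ℂ] H) ^ (2 * n)) (g k)‖ < C) :=
  stmt_15_general T Ps Pc Pu hsum huT hfin M ε hM hε hstab hunst
end

section
/- Let M be a d×d complex matrix and v₀ ∈ ℂᵈ, v₀ ≠ 0. If sup_{t∈ℝ} ‖exp(tM) v₀‖ < ∞, then M has a purely imaginary eigenvalue, i.e. there exist z ∈ ℂ with Re z = 0 and w ∈ ℂᵈ, w ≠ 0, such that M w = z w. -/
/-!
The vectors whose orbit under `exp (t • M)` stays bounded for all real `t` form a subspace that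
is nonzero (it contains `v₀`) and `M`-invariant (since `M` commutes with `exp (t • M)`). Hence it
contains an eigenvector `w` of `M`, say `M w = z w`. Then `exp (t • M) w = e^{t z} w` has norm
`e^{t Re z} ‖w‖`, which is bounded over `t ∈ ℝ` only if `Re z = 0`.
-/

open Matrix

section BoundedOrbits

variable {ι 𝕜 E : Type*} [NontriviallyNormedField 𝕜] [SeminormedAddCommGroup E] [NormedSpace 𝕜 E]

def boundedOrbitSubmodule (T : ι → E →ₗ[𝕜] E) : Submodule 𝕜 E where
  carrier := {v | ∃ C, ∀ i, ‖T i v‖ ≤ C}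
  add_mem' := by
    rintro v w ⟨C, hv⟩ ⟨D, hw⟩
    refine ⟨C + D, fun i => ?_⟩
    rw [map_add]
    exact (norm_add_le _ _).trans (add_le_add (hv i) (hw i))
  zero_mem' := ⟨0, fun i => by simp⟩
  smul_mem' := by
    rintro c v ⟨C, hv⟩
    refine ⟨‖c‖ * C, fun i => ?_⟩
    rw [map_smul, norm_smul]
    exact mul_le_mul_of_nonneg_left (hv i) (norm_nonneg c)

theorem mem_boundedOrbitSubmodule {T : ι → E →ₗ[𝕜] E} {v : E} :
    v ∈ boundedOrbitSubmodule T ↔ ∃ C, ∀ i, ‖T i v‖ ≤ C :=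
  Iff.rfl

theorem map_mem_boundedOrbitSubmodule {T : ι → E →ₗ[𝕜] E} (f : E →L[𝕜] E)
    (hf : ∀ i v, T i (f v) = f (T i v)) {v : E} (hv : v ∈ boundedOrbitSubmodule T) :
    f v ∈ boundedOrbitSubmodule T := by
  obtain ⟨C, hC⟩ := hv
  refine ⟨‖f‖ * C, fun i => ?_⟩
  rw [hf]
  exact (f.le_opNorm _).trans (mul_le_mul_of_nonneg_left (hC i) (norm_nonneg f))

end BoundedOrbits

theorem Module.End.exists_hasEigenvector_mem {K V : Type*} [Field K] [IsAlgClosed K]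
    [AddCommGroup V] [Module K V] [FiniteDimensional K V] (f : Module.End K V)
    {p : Submodule K V} (hp : p ≠ ⊥) (hfp : ∀ x ∈ p, f x ∈ p) :
    ∃ μ, ∃ x ∈ p, f.HasEigenvector μ x := by
  have : Nontrivial p := Submodule.nontrivial_iff_ne_bot.mpr hp
  obtain ⟨μ, hμ⟩ := Module.End.exists_eigenvalue (f.restrict hfp)
  obtain ⟨x, hx⟩ := hμ.exists_hasEigenvector
  refine ⟨μ, x, x.2, Module.End.hasEigenvector_iff.mpr ⟨?_, ?_⟩⟩
  · exact Module.End.mem_eigenspace_iff.mpr (congrArg Subtype.val hx.apply_eq_smul)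
  · exact fun h => hx.2 (Subtype.ext h)

section

attribute [local instance] Matrix.linftyOpNormedRing Matrix.linftyOpNormedAlgebra

theorem Matrix.exp_mulVec_of_mulVec_eq_smul {m 𝕂 : Type*} [Fintype m] [DecidableEq m] [RCLike 𝕂]
    {A : Matrix m m 𝕂} {z : 𝕂} {w : m → 𝕂} (h : A *ᵥ w = z • w) :
    NormedSpace.exp A *ᵥ w = NormedSpace.exp z • w := by
  have hpow (n : ℕ) : A ^ n *ᵥ w = z ^ n • w := by
    induction n with
    | zero => simp
    | succ n ih => rw [pow_succ', ← mulVec_mulVec, ih, mulVec_smul, h, smul_smul, pow_succ]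
  have hA := (NormedSpace.exp_series_hasSum_exp' (𝕂 := 𝕂) A).map
    (Matrix.mulVec.addMonoidHomLeft w) (continuous_id.matrix_mulVec continuous_const)
  have hz := (NormedSpace.exp_series_hasSum_exp' (𝕂 := 𝕂) z).smul_const w
  refine hA.unique (hz.congr_fun fun n => ?_)
  change ((n.factorial : 𝕂)⁻¹ • A ^ n) *ᵥ w = _
  rw [Matrix.smul_mulVec, hpow, smul_smul, smul_eq_mul]

end

theorem Complex.re_eq_zero_of_norm_exp_mul_le {z : ℂ} {C : ℝ}
    (h : ∀ t : ℝ, ‖Complex.exp (t * z)‖ ≤ C) : z.re = 0 := by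
  by_contra hz
  have hexp : Real.exp C ≤ C := by
    simpa [Complex.norm_exp, div_mul_cancel₀ C hz] using h (C / z.re)
  linarith [Real.add_one_le_exp C]

/-- If the full orbit `t ↦ exp(tM) v₀` of a nonzero vector `v₀` under
the matrix exponential is bounded over `t ∈ ℝ`, then `M` has a purely imaginary
eigenvalue. -/
theorem stmt_16 {d : ℕ} (M : Matrix (Fin d) (Fin d) ℂ)
    (v₀ : Fin d → ℂ) (hv₀ : v₀ ≠ 0)
    (hbdd : ∃ C : ℝ, ∀ t : ℝ, ‖(NormedSpace.exp ((t : ℂ) • M)).mulVec v₀‖ ≤ C) :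
    ∃ z : ℂ, z.re = 0 ∧ ∃ w : Fin d → ℂ, w ≠ 0 ∧ M.mulVec w = z • w := by
  obtain ⟨C, hC⟩ := hbdd
  set S := boundedOrbitSubmodule fun t : ℝ => (NormedSpace.exp ((t : ℂ) • M)).mulVecLin
  have hv₀S : v₀ ∈ S := mem_boundedOrbitSubmodule.mpr ⟨C, hC⟩
  have hMS : ∀ v ∈ S, M.mulVecLin v ∈ S := fun v =>
    map_mem_boundedOrbitSubmodule (LinearMap.toContinuousLinearMap M.mulVecLin) fun t v => by
      simp only [LinearMap.coe_toContinuousLinearMap', mulVecLin_apply, mulVec_mulVec,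
        ((Commute.refl M).smul_right (t : ℂ)).exp_right.eq]
  have hS : S ≠ ⊥ := fun h => hv₀ (by rwa [h, Submodule.mem_bot] at hv₀S)
  obtain ⟨z, w, hwS, hw⟩ := Module.End.exists_hasEigenvector_mem M.mulVecLin hS hMS
  obtain ⟨D, hD⟩ := mem_boundedOrbitSubmodule.mp hwS
  have hMw : M *ᵥ w = z • w := hw.apply_eq_smul
  refine ⟨z, Complex.re_eq_zero_of_norm_exp_mul_le (C := D / ‖w‖) fun t => ?_, w, hw.2, hMw⟩
  have hexp := Matrix.exp_mulVec_of_mulVec_eq_smul (A := (t : ℂ) • M) (z := t * z)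
    (by rw [smul_mulVec, hMw, smul_smul])
  have hwt := hD t
  rw [mulVecLin_apply, hexp, norm_smul, ← Complex.exp_eq_exp_ℂ] at hwt
  exact (le_div_iff₀ (norm_pos_iff.mpr hw.2)).mpr hwt
end
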